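/- arXiv:math/9805005 — 8 statements merged into one kernel-verified Lean document; each statement's English description precedes it below -/
import Mathlib

section
/- Up to scalar multiple, Φ^A(α;x) is the unique polynomial solution of the A-hypergeometric system with exponent α: if P ∈ ℂ[x_1,…,x_r] satisfies D_{v⁺}P = D_{v⁻}P for all v ∈ ℤ^r with A·v = 0, and Σ_j ν_{ji} x_j ∂P/∂x_j = α_i P for all i, then P is a constant multiple of Φ^A(α;x). -/
open Finset

noncomputable section

/-- Coefficient function of a formal (Laurent) series in `r` variables. -/
abbrev CoeffFun (r : ℕ) := (Fin r → ℤ) → ℂ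

/-- The mixed partial derivative `D_u f = ∂^{|u|} f / ∂x^u` on coefficient
functions. -/
def Dop {r : ℕ} (u : Fin r → ℕ) (f : CoeffFun r) : CoeffFun r :=
  fun w => (∏ j, ∏ t ∈ Finset.range (u j), ((w j : ℂ) + t + 1)) *
    f (fun j => w j + u j)

/-- The hypergeometric polynomial `Φ^A(α;x) = ∑_{u ∈ ℕ^r, A·u = α} x^u / u!`. -/
def Phi {n r : ℕ} (A : Fin n → Fin r → ℤ) (α : Fin n → ℤ) : CoeffFun r :=
  fun w =>
    if (∀ j, 0 ≤ w j) ∧ (∀ i, ∑ j, A i j * w j = α i) then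
      (∏ j, ((w j).toNat.factorial : ℂ))⁻¹
    else 0

private lemma prodfac (m k : ℕ) :
    (m.factorial : ℂ) * ∏ t ∈ Finset.range k, ((m : ℂ) + t + 1)
      = ((m + k).factorial : ℂ) := by
  induction k with
  | zero => simp
  | succ k ih =>
    rw [Finset.prod_range_succ, ← mul_assoc, ih]
    have : (m + (k + 1)).factorial = (m + k).factorial * (m + k + 1) := by
      rw [show m + (k + 1) = (m + k) + 1 by ring, Nat.factorial_succ]; ring
    rw [this]
    push_cast
    ring

/-- up to scalar multiple, `Φ^A(α;x)` is the unique polynomial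
solution of the `A`-hypergeometric system with exponent `α`.  A polynomial is
a coefficient function `P` supported on finitely many exponents, all of them
nonnegative.  `P` is required to satisfy all toric equations
`D_{v⁺} P = D_{v⁻} P` (for `v` in the kernel of `A`) and the Euler equations
`∑_j ν_{ji} x_j ∂P/∂x_j = α_i P`, stated coefficientwise. -/
theorem polynomial_solution_unique
    {n r : ℕ} (A : Fin n → Fin r → ℤ)
    (lam : Fin n → ℚ) (hlam : ∀ j, ∑ i, lam i * (A i j : ℚ) = 1)
    (α : Fin n → ℤ) (P : CoeffFun r)
    (hpos : ∀ w, P w ≠ 0 → ∀ j, 0 ≤ w j)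
    (hfin : (Function.support P).Finite)
    (htoric : ∀ v : Fin r → ℤ, (∀ i, ∑ j, A i j * v j = 0) →
      Dop (fun j => (v j).toNat) P = Dop (fun j => (-v j).toNat) P)
    (heuler : ∀ (i : Fin n) (w : Fin r → ℤ),
      (∑ j, (A i j : ℂ) * (w j : ℂ)) * P w = (α i : ℂ) * P w) :
    ∃ c : ℂ, P = fun w => c * Phi A α w := by
  -- support of P is contained in the set S of Phi
  have hS : ∀ w, P w ≠ 0 →
      (∀ j, 0 ≤ w j) ∧ (∀ i, ∑ j, A i j * w j = α i) := by
    intro w hw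
    refine ⟨hpos w hw, fun i => ?_⟩
    have h := heuler i w
    have h2 : (∑ j, (A i j : ℂ) * (w j : ℂ)) = (α i : ℂ) :=
      mul_right_cancel₀ hw h
    have h3 : ((∑ j, A i j * w j : ℤ) : ℂ) = ((α i : ℤ) : ℂ) := by
      push_cast; exact h2
    exact_mod_cast h3
  -- key lemma: P w * ∏ w! is constant on S
  have key : ∀ w w' : Fin r → ℤ,
      (∀ j, 0 ≤ w j) → (∀ i, ∑ j, A i j * w j = α i) →
      (∀ j, 0 ≤ w' j) → (∀ i, ∑ j, A i j * w' j = α i) →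
      (∏ j, ((w j).toNat.factorial : ℂ)) * P w
        = (∏ j, ((w' j).toNat.factorial : ℂ)) * P w' := by
    intro w w' hw1 hw2 hw1' hw2'
    set v : Fin r → ℤ := fun j => w j - w' j with hv
    have hker : ∀ i, ∑ j, A i j * v j = 0 := by
      intro i
      have : ∑ j, A i j * v j = (∑ j, A i j * w j) - ∑ j, A i j * w' j := by
        rw [← Finset.sum_sub_distrib]
        apply Finset.sum_congr rfl
        intro j _
        simp [hv]; ring
      rw [this, hw2 i, hw2' i, sub_self]
    have htor := congrFun (htoric v hker) (fun j => min (w j) (w' j))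
    simp only [Dop] at htor
    have e1 : (fun j => min (w j) (w' j) + ((v j).toNat : ℤ)) = w := by
      funext j
      rcases le_total (w j) (w' j) with h | h
      · rw [min_eq_left h]; simp only [hv]; omega
      · rw [min_eq_right h]; simp only [hv]; omega
    have e2 : (fun j => min (w j) (w' j) + ((-v j).toNat : ℤ)) = w' := by
      funext j
      rcases le_total (w j) (w' j) with h | h
      · rw [min_eq_left h]; simp only [hv]; omega
      · rw [min_eq_right h]; simp only [hv]; omega
    rw [e1, e2] at htor
    -- multiply both sides by ∏ (min).toNat!
    have hmul := congrArg (fun x => (∏ j, ((min (w j) (w' j)).toNat.factorial : ℂ)) * x) htor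
    have lhs : (∏ j, ((min (w j) (w' j)).toNat.factorial : ℂ)) *
        ((∏ j, ∏ t ∈ Finset.range ((v j).toNat), (((min (w j) (w' j) : ℤ) : ℂ) + t + 1)) * P w)
        = (∏ j, ((w j).toNat.factorial : ℂ)) * P w := by
      rw [← mul_assoc, ← Finset.prod_mul_distrib]
      congr 1
      apply Finset.prod_congr rfl
      intro j _
      have hm : (((min (w j) (w' j) : ℤ)) : ℂ) = (((min (w j) (w' j)).toNat : ℕ) : ℂ) := by
        have : (0:ℤ) ≤ min (w j) (w' j) := le_min (hw1 j) (hw1' j)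
        exact_mod_cast (Int.toNat_of_nonneg this).symm
      rw [hm, prodfac]
      congr 2
      have h1 := hw1 j
      have h2 := hw1' j
      rcases le_total (w j) (w' j) with h | h
      · rw [min_eq_left h]; simp only [hv]; omega
      · rw [min_eq_right h]; simp only [hv]; omega
    have rhs : (∏ j, ((min (w j) (w' j)).toNat.factorial : ℂ)) *
        ((∏ j, ∏ t ∈ Finset.range ((-v j).toNat), (((min (w j) (w' j) : ℤ) : ℂ) + t + 1)) * P w')
        = (∏ j, ((w' j).toNat.factorial : ℂ)) * P w' := by
      rw [← mul_assoc, ← Finset.prod_mul_distrib]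
      congr 1
      apply Finset.prod_congr rfl
      intro j _
      have hm : (((min (w j) (w' j) : ℤ)) : ℂ) = (((min (w j) (w' j)).toNat : ℕ) : ℂ) := by
        have : (0:ℤ) ≤ min (w j) (w' j) := le_min (hw1 j) (hw1' j)
        exact_mod_cast (Int.toNat_of_nonneg this).symm
      rw [hm, prodfac]
      congr 2
      have h1 := hw1 j
      have h2 := hw1' j
      rcases le_total (w j) (w' j) with h | h
      · rw [min_eq_left h]; simp only [hv]; omega
      · rw [min_eq_right h]; simp only [hv]; omega
    rw [lhs, rhs] at hmul
    exact hmul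
  by_cases hex : ∃ w₀ : Fin r → ℤ,
      (∀ j, 0 ≤ w₀ j) ∧ (∀ i, ∑ j, A i j * w₀ j = α i)
  · obtain ⟨w₀, h₀1, h₀2⟩ := hex
    refine ⟨(∏ j, ((w₀ j).toNat.factorial : ℂ)) * P w₀, ?_⟩
    funext w
    by_cases hw : (∀ j, 0 ≤ w j) ∧ (∀ i, ∑ j, A i j * w j = α i)
    · have hk := key w₀ w h₀1 h₀2 hw.1 hw.2
      have hfac : (∏ j, ((w j).toNat.factorial : ℂ)) ≠ 0 := by
        apply Finset.prod_ne_zero_iff.mpr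
        intro j _
        exact_mod_cast (Nat.factorial_pos _).ne'
      simp only [Phi, if_pos hw]
      field_simp
      rw [hk]
      ring
    · have hP : P w = 0 := by
        by_contra h
        exact hw (hS w h)
      simp only [Phi, if_neg hw, hP, mul_zero]
  · refine ⟨0, ?_⟩
    funext w
    simp only [zero_mul]
    by_contra h
    exact hex ⟨w, hS w h⟩
end
end

section
/- With A as in the monomial curve case (first row all 1's, second row 0 < k_1 < ⋯ < k_m < d, gcd(k_1,…,k_m,d)=1), suppose a formal Laurent series solution of the A-hypergeometric system contains a nonzero monomial term c·x^u with u_{k_i} < 0 for some i. Then, since the solution is annihilated by D_{k_i}^d − D_0^{d−k_i}D_d^{k_i}, it must contain nonzero terms c_j·x^{v(j)} with v(j)_{k_i} = u_{k_i} − jd for every positive integer j; hence no Laurent polynomial solution can have a negative exponent in any variable x_{k_i}, i = 1,…,m. -/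
open Finset

noncomputable section

/-- `L` is a solution of the `A`-hypergeometric system with exponent
`(α1, α2)` for the monomial curve matrix `A` with columns `(1, k_j)`:
it is annihilated by all box operators `D_{v⁺} − D_{v⁻}` for `v` in the
kernel lattice of `A`, and satisfies the two Euler equations (written
coefficientwise). -/
def IsHypSol (m : ℕ) (k : Fin (m + 2) → ℕ) (α1 α2 : ℤ)
    (L : CoeffFun (m + 2)) : Prop :=
  (∀ v : Fin (m + 2) → ℤ, (∑ j, v j) = 0 → (∑ j, (k j : ℤ) * v j) = 0 →
    Dop (fun j => (v j).toNat) L = Dop (fun j => (-v j).toNat) L) ∧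
  (∀ w, (∑ j, ((w j : ℤ) : ℂ)) * L w = (α1 : ℂ) * L w) ∧
  (∀ w, (∑ j, (k j : ℂ) * ((w j : ℤ) : ℂ)) * L w = (α2 : ℂ) * L w)

/-- for the monomial curve matrix `A` with second row
`0 = k_0 < k_1 < ⋯ < k_m < k_{m+1} = d`, `gcd(k_1,…,k_m,d) = 1`, no Laurent
polynomial solution of the `A`-hypergeometric system can have a negative
exponent in any of the middle variables `x_{k_1}, …, x_{k_m}`.  (If it
contained a term `c·x^u` with `u_{k_i} < 0`, being annihilated by
`D_{k_i}^d − D_0^{d−k_i} D_d^{k_i}` it would have to contain nonzero terms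
with exponents `u_{k_i} − jd` for all `j ≥ 1`, contradicting finiteness.) -/
theorem laurent_solution_no_negative_middle_exponent
    (m : ℕ) (k : Fin (m + 2) → ℕ)
    (hmono : StrictMono k) (h0 : k 0 = 0)
    (hgcd : Finset.univ.gcd k = 1)
    (α1 α2 : ℤ) (L : CoeffFun (m + 2))
    (hfin : (Function.support L).Finite)
    (hsol : IsHypSol m k α1 α2 L) :
    ∀ w : Fin (m + 2) → ℤ, L w ≠ 0 →
      ∀ j : Fin (m + 2), j ≠ 0 → j ≠ Fin.last (m + 1) → 0 ≤ w j := by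
  
  intro w hw i hi0 hilast
  by_contra hneg
  push_neg at hneg
  set d : ℕ := k (Fin.last (m + 1)) with hd
  have hkpos : k 0 < k i := hmono (Fin.pos_of_ne_zero hi0)
  have hipos : 0 < k i := by omega
  have hid : k i < d := hmono (lt_of_le_of_ne (Fin.le_last i) hilast)
  have hdpos : 0 < d := lt_trans hipos hid
  have h0last : (0 : Fin (m + 2)) ≠ Fin.last (m + 1) := by
    simp [Fin.ext_iff]
  have key : ∀ z : Fin (m + 2) → ℤ, L z ≠ 0 → z i < 0 →
      ∃ z', L z' ≠ 0 ∧ z' i = z i - d := by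
    intro z hz hzi
    set v : Fin (m + 2) → ℤ := fun j =>
      (d : ℤ) * (Pi.single i (1 : ℤ) : Fin (m + 2) → ℤ) j
        - ((d : ℤ) - (k i : ℤ)) * (Pi.single 0 (1 : ℤ) : Fin (m + 2) → ℤ) j
        - (k i : ℤ) * (Pi.single (Fin.last (m + 1)) (1 : ℤ) : Fin (m + 2) → ℤ) j with hv
    have hvi : v i = d := by
      simp [hv, Pi.single_eq_same, Pi.single_eq_of_ne hi0, Pi.single_eq_of_ne hilast]
    have hsum1 : ∑ j, v j = 0 := by
      simp [hv, Finset.sum_sub_distrib, ← Finset.mul_sum, Finset.sum_pi_single']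
    have e : ∀ (a : Fin (m + 2)) (c : ℤ),
        ∑ j, (k j : ℤ) * (c * (Pi.single a (1 : ℤ) : Fin (m + 2) → ℤ) j) = (k a : ℤ) * c := by
      intro a c
      rw [Finset.sum_eq_single a]
      · simp [Pi.single_eq_same]
      · intro b _ hb; simp [Pi.single_eq_of_ne hb]
      · simp
    have hsum2 : ∑ j, (k j : ℤ) * v j = 0 := by
      simp only [hv, mul_sub, Finset.sum_sub_distrib, e]
      rw [h0, ← hd]
      push_cast
      ring
    have hbox := hsol.1 v hsum1 hsum2
    have hup : (fun j => (v j).toNat) = Pi.single i d := by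
      funext j
      by_cases h1 : j = i
      · rw [h1, hvi]; simp
      by_cases h2 : j = 0
      · subst h2
        have hv0 : v 0 = (k i : ℤ) - d := by
          simp [hv, Pi.single_eq_same, Pi.single_eq_of_ne h1,
            Pi.single_eq_of_ne h0last]
        rw [hv0, Pi.single_eq_of_ne h1]
        omega
      by_cases h3 : j = Fin.last (m + 1)
      · subst h3
        have hvl : v (Fin.last (m + 1)) = -(k i : ℤ) := by
          simp [hv, Pi.single_eq_same, Pi.single_eq_of_ne h1,
            Pi.single_eq_of_ne h2]
        rw [hvl, Pi.single_eq_of_ne h1]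
        omega
      · have hvj : v j = 0 := by
          simp [hv, Pi.single_eq_of_ne h1, Pi.single_eq_of_ne h2, Pi.single_eq_of_ne h3]
        rw [hvj, Pi.single_eq_of_ne h1]
        rfl
    set z1 : Fin (m + 2) → ℤ := Function.update z i (z i - d) with hz1
    have hz1i : z1 i = z i - d := by simp [hz1]
    have harg : (fun j => z1 j + ((Pi.single i d : Fin (m + 2) → ℕ) j : ℤ)) = z := by
      funext j
      by_cases h1 : j = i
      · rw [h1, hz1i, Pi.single_eq_same]; ring
      · simp [hz1, Function.update_of_ne h1, Pi.single_eq_of_ne h1]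
    have hprod : (∏ j, ∏ t ∈ Finset.range ((Pi.single i d : Fin (m + 2) → ℕ) j),
        ((z1 j : ℂ) + t + 1)) ≠ 0 := by
      rw [Finset.prod_ne_zero_iff]
      intro j _
      rw [Finset.prod_ne_zero_iff]
      intro t ht
      by_cases h1 : j = i
      · rw [h1, Pi.single_eq_same, Finset.mem_range] at ht
        have hne : z i - d + (t : ℤ) + 1 ≠ 0 := by omega
        have hcast : ((z1 j : ℂ) + t + 1) = ((z i - d + (t : ℤ) + 1 : ℤ) : ℂ) := by
          rw [h1, hz1i]
          push_cast
          ring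
        rw [hcast]
        exact_mod_cast hne
      · rw [Pi.single_eq_of_ne h1] at ht
        simp at ht
    have hL := congrFun hbox z1
    rw [hup] at hL
    have hlhs : Dop (Pi.single i d) L z1 ≠ 0 := by
      simp only [Dop]
      rw [harg]
      exact mul_ne_zero hprod hz
    rw [hL] at hlhs
    simp only [Dop] at hlhs
    refine ⟨fun j => z1 j + ((-v j).toNat : ℤ), right_ne_zero_of_mul hlhs, ?_⟩
    show z1 i + ((-v i).toNat : ℤ) = z i - d
    rw [hvi, hz1i]
    simp
  have iter : ∀ n : ℕ, ∃ z, L z ≠ 0 ∧ z i = w i - (n : ℤ) * d := by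
    intro n
    induction n with
    | zero => exact ⟨w, hw, by simp⟩
    | succ n ih =>
      obtain ⟨z, hz, hzi⟩ := ih
      have hnn : (0 : ℤ) ≤ (n : ℤ) * d := by positivity
      have hzneg : z i < 0 := by rw [hzi]; linarith
      obtain ⟨z', hz', hzi'⟩ := key z hz hzneg
      refine ⟨z', hz', ?_⟩
      rw [hzi', hzi]
      push_cast
      ring
  choose f hf1 hf2 using iter
  have hinj : Function.Injective f := by
    intro a b hab
    have hab' : w i - (a : ℤ) * d = w i - (b : ℤ) * d := by
      rw [← hf2 a, ← hf2 b, hab]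
    have hd0 : (d : ℤ) ≠ 0 := by exact_mod_cast hdpos.ne'
    have : (a : ℤ) * d = (b : ℤ) * d := by linarith
    exact_mod_cast mul_right_cancel₀ hd0 this
  exact hfin.not_infinite (Set.infinite_of_injective_forall_mem hinj fun n => hf1 n)
end
end

section
/- Let A be the 2×(m+2) monomial-curve matrix with second row (0,k_1,…,k_m,d). If α ∈ A·ℕ^{m+2}, then every Laurent polynomial solution of the A-hypergeometric system with exponent α is a constant multiple of the hypergeometric polynomial Φ^A(α;x). In particular no such Laurent solution has a monomial with negative exponent in x_0 or x_d. -/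
open Finset

noncomputable section

/-- The hypergeometric polynomial `Φ^A(α;x)` for the monomial curve matrix
`A` with columns `(1, k_j)`. -/
def PhiCurve (m : ℕ) (k : Fin (m + 2) → ℕ) (α1 α2 : ℤ) : CoeffFun (m + 2) :=
  fun w =>
    if (∀ j, 0 ≤ w j) ∧ (∑ j, w j) = α1 ∧ (∑ j, (k j : ℤ) * w j) = α2 then
      (∏ j, ((w j).toNat.factorial : ℂ))⁻¹
    else 0

private lemma factProdAux (b : ℤ) (hb : 0 ≤ b) (n N : ℕ) (hN : b.toNat + n = N) :
    (b.toNat.factorial : ℂ) * ∏ t ∈ Finset.range n, ((b : ℂ) + t + 1)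
      = (N.factorial : ℂ) := by
  subst hN
  induction n with
  | zero => simp
  | succ n ih =>
      rw [Finset.prod_range_succ, ← mul_assoc, ih]
      have hb' : ((b.toNat : ℕ) : ℂ) = (b : ℂ) := by
        exact_mod_cast congrArg (Int.cast : ℤ → ℂ) (Int.toNat_of_nonneg hb)
      rw [show b.toNat + (n + 1) = (b.toNat + n) + 1 from rfl, Nat.factorial_succ]
      rw [← hb']
      push_cast
      ring

private lemma prodZeroAux (b : ℤ) (n : ℕ) (hb : b < 0) (hn : 0 ≤ b + n) :
    ∏ t ∈ Finset.range n, ((b : ℂ) + t + 1) = 0 := by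
  apply Finset.prod_eq_zero (i := (-b - 1).toNat)
  · rw [Finset.mem_range]; omega
  · have h : (((-b - 1).toNat : ℕ) : ℤ) = -b - 1 := Int.toNat_of_nonneg (by omega)
    have h' : (((-b - 1).toNat : ℕ) : ℂ) = ((-b - 1 : ℤ) : ℂ) := by exact_mod_cast h
    rw [h']
    push_cast
    ring

/-- Lemma 1.3: if `α ∈ A·ℕ^{m+2}`, then every Laurent
polynomial solution of the `A`-hypergeometric system with exponent `α` is a
constant multiple of the hypergeometric polynomial `Φ^A(α;x)`. -/
theorem laurent_solution_is_polynomial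
    (m : ℕ) (k : Fin (m + 2) → ℕ)
    (hmono : StrictMono k) (h0 : k 0 = 0)
    (hgcd : Finset.univ.gcd k = 1)
    (α1 α2 : ℤ)
    (hα : ∃ u : Fin (m + 2) → ℕ,
      (∑ j, (u j : ℤ)) = α1 ∧ (∑ j, (k j : ℤ) * u j) = α2)
    (L : CoeffFun (m + 2))
    (hfin : (Function.support L).Finite)
    (hsol : IsHypSol m k α1 α2 L) :
    ∃ c : ℂ, L = fun w => c * PhiCurve m k α1 α2 w := by
  obtain ⟨u, hu1, hu2⟩ := hα
  obtain ⟨hbox, hE1, hE2⟩ := hsol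
  -- Euler equations restrict the support to the fiber of α
  have hcancel : ∀ w : Fin (m + 2) → ℤ, L w ≠ 0 →
      (∑ j, w j) = α1 ∧ (∑ j, (k j : ℤ) * w j) = α2 := by
    intro w hw
    constructor
    · have h := mul_right_cancel₀ hw (hE1 w)
      exact_mod_cast h
    · have h := mul_right_cancel₀ hw (hE2 w)
      exact_mod_cast h
  -- the box relation for v = u - w, evaluated at b = min(w,u)
  have hbr : ∀ w : Fin (m + 2) → ℤ, (∑ j, w j) = α1 → (∑ j, (k j : ℤ) * w j) = α2 →
      (∏ j, ∏ t ∈ Finset.range (((u j : ℤ) - w j).toNat),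
          ((((min (w j) (u j : ℤ)) : ℤ) : ℂ) + t + 1)) * L (fun j => (u j : ℤ))
      = (∏ j, ∏ t ∈ Finset.range ((-((u j : ℤ) - w j)).toNat),
          ((((min (w j) (u j : ℤ)) : ℤ) : ℂ) + t + 1)) * L w := by
    intro w h1 h2
    have hv1 : (∑ j, ((u j : ℤ) - w j)) = 0 := by
      rw [Finset.sum_sub_distrib, hu1, h1]; ring
    have hv2 : (∑ j, (k j : ℤ) * ((u j : ℤ) - w j)) = 0 := by
      have heq : ∀ j ∈ Finset.univ, (k j : ℤ) * ((u j : ℤ) - w j)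
          = (k j : ℤ) * (u j : ℤ) - (k j : ℤ) * w j := fun j _ => by ring
      rw [Finset.sum_congr rfl heq, Finset.sum_sub_distrib, hu2, h2]; ring
    have hrel := congrFun (hbox (fun j => (u j : ℤ) - w j) hv1 hv2)
        (fun j => min (w j) (u j : ℤ))
    simp only [Dop] at hrel
    have e1 : (fun j => min (w j) (u j : ℤ) + ((((u j : ℤ) - w j).toNat : ℕ) : ℤ))
        = fun j => (u j : ℤ) := funext fun j => by omega
    have e2 : (fun j => min (w j) (u j : ℤ) + (((-((u j : ℤ) - w j)).toNat : ℕ) : ℤ)) = w :=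
      funext fun j => by omega
    rw [e1, e2] at hrel
    exact hrel
  -- no negative exponents in the support
  have hnonneg : ∀ w : Fin (m + 2) → ℤ, L w ≠ 0 → ∀ j, 0 ≤ w j := by
    intro w hw
    by_contra hneg
    push_neg at hneg
    obtain ⟨j0, hj0⟩ := hneg
    obtain ⟨h1, h2⟩ := hcancel w hw
    have hrel := hbr w h1 h2
    have hL : (∏ j, ∏ t ∈ Finset.range (((u j : ℤ) - w j).toNat),
        ((((min (w j) (u j : ℤ)) : ℤ) : ℂ) + t + 1)) = 0 := by
      apply Finset.prod_eq_zero (Finset.mem_univ j0)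
      have hmin : min (w j0) ((u j0 : ℤ)) = w j0 := by omega
      rw [hmin]
      exact prodZeroAux _ _ hj0 (by omega)
    rw [hL, zero_mul] at hrel
    have hR : (∏ j, ∏ t ∈ Finset.range ((-((u j : ℤ) - w j)).toNat),
        ((((min (w j) (u j : ℤ)) : ℤ) : ℂ) + t + 1)) ≠ 0 := by
      rw [Finset.prod_ne_zero_iff]
      intro j _
      rw [Finset.prod_ne_zero_iff]
      intro t ht
      rw [Finset.mem_range] at ht
      have hpos : 0 < min (w j) ((u j : ℤ)) + t + 1 := by omega
      have hcst : ((min (w j) (u j : ℤ) : ℤ) : ℂ) + t + 1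
          = (((min (w j) (u j : ℤ)) + t + 1 : ℤ) : ℂ) := by push_cast; ring
      rw [hcst]
      exact_mod_cast hpos.ne'
    exact hw ((mul_eq_zero.mp hrel.symm).resolve_left hR)
  -- key rigidity on the nonnegative fiber
  have key : ∀ w : Fin (m + 2) → ℤ, (∀ j, 0 ≤ w j) → (∑ j, w j) = α1 →
      (∑ j, (k j : ℤ) * w j) = α2 →
      (∏ j, ((w j).toNat.factorial : ℂ)) * L w
        = (∏ j, ((u j).factorial : ℂ)) * L (fun j => (u j : ℤ)) := by
    intro w hw0 h1 h2
    have hrel := hbr w h1 h2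
    have hmul := congrArg
      (fun z => (∏ j, (((min (w j) (u j : ℤ)).toNat.factorial : ℕ) : ℂ)) * z) hrel
    rw [← mul_assoc, ← mul_assoc, ← Finset.prod_mul_distrib, ← Finset.prod_mul_distrib] at hmul
    have eL : ∀ j ∈ Finset.univ, ((min (w j) (u j : ℤ)).toNat.factorial : ℂ)
        * ∏ t ∈ Finset.range (((u j : ℤ) - w j).toNat),
            ((((min (w j) (u j : ℤ)) : ℤ) : ℂ) + t + 1)
        = ((u j).factorial : ℂ) := fun j _ =>
      factProdAux _ (by have := hw0 j; omega) _ _ (by have := hw0 j; omega)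
    have eR : ∀ j ∈ Finset.univ, ((min (w j) (u j : ℤ)).toNat.factorial : ℂ)
        * ∏ t ∈ Finset.range ((-((u j : ℤ) - w j)).toNat),
            ((((min (w j) (u j : ℤ)) : ℤ) : ℂ) + t + 1)
        = ((w j).toNat.factorial : ℂ) := fun j _ =>
      factProdAux _ (by have := hw0 j; omega) _ _ (by have := hw0 j; omega)
    rw [Finset.prod_congr rfl eL, Finset.prod_congr rfl eR] at hmul
    exact hmul.symm
  refine ⟨(∏ j, ((u j).factorial : ℂ)) * L (fun j => (u j : ℤ)), funext fun w => ?_⟩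
  by_cases hcond : (∀ j, 0 ≤ w j) ∧ (∑ j, w j) = α1 ∧ (∑ j, (k j : ℤ) * w j) = α2
  · obtain ⟨hw0, h1, h2⟩ := hcond
    have hk := key w hw0 h1 h2
    have hne : (∏ j, ((w j).toNat.factorial : ℂ)) ≠ 0 := by
      rw [Finset.prod_ne_zero_iff]
      intro j _
      exact_mod_cast (w j).toNat.factorial_ne_zero
    rw [PhiCurve, if_pos ⟨hw0, h1, h2⟩, ← hk, mul_comm (∏ j, ((w j).toNat.factorial : ℂ)) (L w),
      mul_assoc, mul_inv_cancel₀ hne, mul_one]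
  · rw [PhiCurve, if_neg hcond, mul_zero]
    by_contra hw
    exact hcond ⟨hnonneg w hw, (hcancel w hw).1, (hcancel w hw).2⟩
end
end

section
/- For α ∈ ℤ² \ A·ℕ^{m+2}, the Laurent polynomial Ψ^A_d(α;x) := Σ_{r≥1} (−1)^r (r−1)! Φ^B(α+r(1,d); x')/x_d^r satisfies D_u(Ψ^A_d(α;x)) = Ψ^A_d(α − A·u; x) for every u ∈ ℕ^{m+2}. -/
open Finset

noncomputable section

/-- The Laurent polynomial
`Ψ^A_d(α;x) = ∑_{r ≥ 1} (−1)^r (r−1)! Φ^B(α + r(1,d); x')/x_d^r`,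
given by its coefficient function: the coefficient of
`x'^{u'} x_d^{-r}` (`u' ∈ ℕ^{m+1}`, `r ≥ 1`, `B·u' = α + r(1,d)`) is
`(−1)^r (r−1)!/u'!`.  Here `B` consists of the first `m+1` columns
`(1,k_j)`, `j = 0,…,m`, of `A` and `d = k_{m+1}`. -/
def PsiD (m : ℕ) (k : Fin (m + 2) → ℕ) (α1 α2 : ℤ) : CoeffFun (m + 2) :=
  fun w =>
    let r : ℤ := -(w (Fin.last (m + 1)))
    if 1 ≤ r ∧ (∀ j : Fin (m + 1), 0 ≤ w j.castSucc) ∧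
        (∑ j : Fin (m + 1), w j.castSucc) = α1 + r ∧
        (∑ j : Fin (m + 1), (k j.castSucc : ℤ) * w j.castSucc)
          = α2 + r * (k (Fin.last (m + 1)) : ℤ) then
      (-1) ^ r.toNat * ((r.toNat - 1).factorial : ℂ) *
        (∏ j : Fin (m + 1), ((w j.castSucc).toNat.factorial : ℂ))⁻¹
    else 0

/-!
On the hyperplane `A·w = α - A·u`, off which both sides vanish, the coefficient of `Ψ` at `w`
factors into one-variable coefficients: `1/n!` in each variable of `B`, and `(-1)^r (r-1)!` at
`n = -r` in `x_d`. Differentiation multiplies the coefficient at `w + u` by the rising products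
`(w_j+1)⋯(w_j+u_j)`, and both one-variable coefficients `c` satisfy `(n+1) c(n+1) = c(n)`, the
second only for `n ≤ -2`. This settles every coefficient except those with `w_d + u_d ≥ 0`, where
the left side vanishes; there `w + u ∈ ℕ^{m+2}` would solve `A·(w+u) = α`, so some `w_j` with
`j < d` is negative and the factor `1/w_j!` kills the right side.
-/

/-- `A·w` for the matrix `A` with columns `(1, k j)`. -/
def degree {n : ℕ} (k : Fin n → ℕ) (w : Fin n → ℤ) : ℤ × ℤ :=
  (∑ j, w j, ∑ j, (k j : ℤ) * w j)

lemma degree_add {n : ℕ} (k : Fin n → ℕ) (v w : Fin n → ℤ) :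
    degree k (v + w) = degree k v + degree k w := by
  simp only [degree, Pi.add_apply, mul_add, sum_add_distrib, Prod.mk_add_mk]

lemma exists_lt_zero_of_degree_eq {n : ℕ} {k : Fin n → ℕ} {α1 α2 : ℤ}
    (hα : ¬∃ u : Fin n → ℕ, (∑ j, (u j : ℤ)) = α1 ∧ (∑ j, (k j : ℤ) * u j) = α2)
    {v : Fin n → ℤ} (hv : degree k v = (α1, α2)) : ∃ j, v j < 0 := by
  by_contra! hnonneg
  have hcast : ∀ j, ((v j).toNat : ℤ) = v j := fun j => Int.toNat_of_nonneg (hnonneg j)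
  exact hα ⟨fun j => (v j).toNat, by simpa only [hcast, degree, Prod.mk.injEq] using hv⟩

def invFactorial (n : ℤ) : ℂ :=
  if 0 ≤ n then ((n.toNat.factorial : ℕ) : ℂ)⁻¹ else 0

/-- The coefficient `(-1)^r (r-1)!` of `x_d^{-r}` in `Ψ`, placed at `n = -r`. -/
def negPowerCoeff (n : ℤ) : ℂ :=
  if n ≤ -1 then (-1) ^ (-n).toNat * (((-n).toNat - 1).factorial : ℂ) else 0

lemma invFactorial_of_neg {n : ℤ} (hn : n < 0) : invFactorial n = 0 :=
  if_neg (not_le.2 hn)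

lemma negPowerCoeff_of_nonneg {n : ℤ} (hn : 0 ≤ n) : negPowerCoeff n = 0 :=
  if_neg (by omega)

lemma add_one_mul_invFactorial_add_one (n : ℤ) :
    ((n : ℂ) + 1) * invFactorial (n + 1) = invFactorial n := by
  rcases lt_trichotomy n (-1) with hn | rfl | hn
  · rw [invFactorial_of_neg (by omega), invFactorial_of_neg (by omega), mul_zero]
  · norm_num [invFactorial_of_neg]
  · lift n to ℕ using (by omega)
    simp only [invFactorial, Nat.cast_nonneg, if_true, Int.toNat_natCast]
    rw [show (n : ℤ) + 1 = ((n + 1 : ℕ) : ℤ) by push_cast; ring, if_pos (by positivity),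
      Int.toNat_natCast, Nat.factorial_succ]
    push_cast
    field_simp

lemma add_one_mul_negPowerCoeff_add_one {n : ℤ} (hn : n ≤ -2) :
    ((n : ℂ) + 1) * negPowerCoeff (n + 1) = negPowerCoeff n := by
  obtain ⟨r, rfl⟩ : ∃ r : ℕ, n = -(r + 2) := ⟨(-n - 2).toNat, by omega⟩
  simp only [negPowerCoeff, if_pos (show -((r : ℤ) + 2) + 1 ≤ -1 by omega),
    if_pos (show -((r : ℤ) + 2) ≤ -1 by omega)]
  rw [show (-(-((r : ℤ) + 2) + 1)).toNat = r + 1 by omega,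
    show (-(-((r : ℤ) + 2))).toNat = r + 2 by omega]
  simp only [Nat.add_sub_cancel, show r + 2 - 1 = r + 1 by omega, Nat.factorial_succ, pow_succ]
  push_cast
  ring

lemma prod_range_mul_eq_of_recurrence (f : ℤ → ℂ) (w : ℤ) (u : ℕ)
    (hf : ∀ n < w + u, ((n : ℂ) + 1) * f (n + 1) = f n) :
    (∏ t ∈ range u, ((w : ℂ) + t + 1)) * f (w + u) = f w := by
  induction u with
  | zero => simp
  | succ u ih =>
    rw [prod_range_succ, mul_assoc, Nat.cast_succ, ← add_assoc,
      show ((w : ℂ) + u + 1) = (((w + u : ℤ)) : ℂ) + 1 by push_cast; ring,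
      hf _ (by omega), ih fun n hn => hf n (by omega)]

lemma PsiD_eq_ite (m : ℕ) (k : Fin (m + 2) → ℕ) (α1 α2 : ℤ) (w : Fin (m + 2) → ℤ) :
    PsiD m k α1 α2 w = if degree k w = (α1, α2) then
      (∏ j : Fin (m + 1), invFactorial (w j.castSucc)) * negPowerCoeff (w (Fin.last (m + 1)))
      else 0 := by
  have hdeg : degree k w = (α1, α2) ↔
      (∑ j : Fin (m + 1), w j.castSucc) = α1 + -w (Fin.last (m + 1)) ∧
      (∑ j : Fin (m + 1), (k j.castSucc : ℤ) * w j.castSucc)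
        = α2 + -w (Fin.last (m + 1)) * k (Fin.last (m + 1)) := by
    simp only [degree, Prod.mk.injEq, Fin.sum_univ_castSucc]
    constructor <;> rintro ⟨h1, h2⟩ <;> constructor <;> linarith
  have hlast : 1 ≤ -w (Fin.last (m + 1)) ↔ w (Fin.last (m + 1)) ≤ -1 := by omega
  simp only [PsiD, invFactorial, negPowerCoeff, Fintype.prod_ite_zero, hdeg, hlast]
  split_ifs <;> first
    | (exfalso; tauto)
    | simp only [zero_mul, mul_zero, prod_inv_distrib, mul_comm]

theorem PsiD_derivative_general
    (m : ℕ) (k : Fin (m + 2) → ℕ)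
    (α1 α2 : ℤ)
    (hα : ¬∃ u : Fin (m + 2) → ℕ,
      (∑ j, (u j : ℤ)) = α1 ∧ (∑ j, (k j : ℤ) * u j) = α2)
    (u : Fin (m + 2) → ℕ) :
    Dop u (PsiD m k α1 α2) =
      PsiD m k (α1 - ∑ j, (u j : ℤ)) (α2 - ∑ j, (k j : ℤ) * u j) := by
  funext w
  have hdeg : degree k (w + fun j => (u j : ℤ)) = (α1, α2) ↔
      degree k w = (α1 - ∑ j, (u j : ℤ), α2 - ∑ j, (k j : ℤ) * u j) := by
    rw [degree_add, ← Prod.mk_sub_mk, eq_sub_iff_add_eq]; rfl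
  change _ * PsiD m k α1 α2 (w + fun j => (u j : ℤ)) = _
  rw [PsiD_eq_ite, PsiD_eq_ite, if_congr hdeg rfl rfl]
  split_ifs with h
  case neg => exact mul_zero _
  rw [Fin.prod_univ_castSucc, mul_mul_mul_comm, ← prod_mul_distrib]
  simp only [Pi.add_apply]
  simp_rw [prod_range_mul_eq_of_recurrence invFactorial _ _
    fun n _ => add_one_mul_invFactorial_add_one n]
  by_cases hL : w (Fin.last (m + 1)) + u (Fin.last (m + 1)) ≤ -1
  · rw [prod_range_mul_eq_of_recurrence negPowerCoeff _ _
      fun n hn => add_one_mul_negPowerCoeff_add_one (by omega)]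
  · rw [negPowerCoeff_of_nonneg (by omega), mul_zero, mul_zero, eq_comm]
    obtain ⟨j, hj⟩ : ∃ j, w j + u j < 0 := exists_lt_zero_of_degree_eq hα (hdeg.2 h)
    rcases Fin.eq_castSucc_or_eq_last j with ⟨i, rfl⟩ | rfl
    · rw [prod_eq_zero (mem_univ i) (invFactorial_of_neg (by omega)), zero_mul]
    · omega

/-- for `α ∈ ℤ² \ A·ℕ^{m+2}`, the Laurent polynomial
`Ψ^A_d(α;x)` satisfies `D_u(Ψ^A_d(α;x)) = Ψ^A_d(α − A·u; x)` for every
`u ∈ ℕ^{m+2}`. -/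
theorem PsiD_derivative
    (m : ℕ) (k : Fin (m + 2) → ℕ)
    (hmono : StrictMono k) (h0 : k 0 = 0)
    (hgcd : Finset.univ.gcd k = 1)
    (α1 α2 : ℤ)
    (hα : ¬∃ u : Fin (m + 2) → ℕ,
      (∑ j, (u j : ℤ)) = α1 ∧ (∑ j, (k j : ℤ) * u j) = α2)
    (u : Fin (m + 2) → ℕ) :
    Dop u (PsiD m k α1 α2) =
      PsiD m k (α1 - ∑ j, (u j : ℤ)) (α2 - ∑ j, (k j : ℤ) * u j) :=
  PsiD_derivative_general m k α1 α2 hα u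
end
end

section
/- Define I(A) = A·ℕ^{m+2}, F_0(A) = C·ℕ^{m+1} − ℕ(1,0), F_d(A) = B·ℕ^{m+1} − ℕ(1,d), E_0(A) = F_0(A)\I(A), E_d(A) = F_d(A)\I(A), and E(A) = E_0(A) ∩ E_d(A). Then the set E(A) ⊂ ℤ² is finite. -/
open Finset

/-- `I(A) = A·ℕ^{m+2}`, the semigroup generated by the columns `(1,k_j)`. -/
def Isg (m : ℕ) (k : Fin (m + 2) → ℕ) : Set (ℤ × ℤ) :=
  {α | ∃ u : Fin (m + 2) → ℕ,
    (∑ j, (u j : ℤ)) = α.1 ∧ (∑ j, (k j : ℤ) * u j) = α.2}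

/-- `F_0(A) = C·ℕ^{m+1} − ℕ(1,0)`, where `C` consists of the last `m+1`
columns of `A` (recall the first column is `(1, k_0) = (1,0)`). -/
def F0 (m : ℕ) (k : Fin (m + 2) → ℕ) : Set (ℤ × ℤ) :=
  {α | ∃ (u : Fin (m + 1) → ℕ) (r : ℕ),
    α.1 = (∑ j, (u j : ℤ)) - r ∧ α.2 = ∑ j, (k j.succ : ℤ) * u j}

/-- `F_d(A) = B·ℕ^{m+1} − ℕ(1,d)`, where `B` consists of the first `m+1`
columns of `A` and `d = k_{m+1}`. -/
def Fd (m : ℕ) (k : Fin (m + 2) → ℕ) : Set (ℤ × ℤ) :=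
  {α | ∃ (u : Fin (m + 1) → ℕ) (r : ℕ),
    α.1 = (∑ j, (u j : ℤ)) - r ∧
    α.2 = (∑ j, (k j.castSucc : ℤ) * u j) - r * (k (Fin.last (m + 1)) : ℤ)}


/-!
A point `(n, s)` of `F_d(A) \ I(A)` needs a genuine subtraction of `(1, d)`, and every column of
`B` has slope `< d`, so `s < (d - 1) n`. For a point of `F_0(A) \ I(A)`, trading `d` copies of
`k_j` for `k_j` copies of `d` gives a representation of `s` by the columns of `C` using each
`k_j ≠ d` fewer than `d` times; it would put `(n, s)` in `I(A)` if it had at most `n` summands,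
hence `d n < s + m d²`. Together with `s ≥ 0` these confine `E(A)` to a bounded box.
-/

theorem exists_lt_sum_mul_add_mul_eq {m d : ℕ} (hd : 0 < d) (g v : Fin m → ℕ) (a : ℕ) :
    ∃ (w : Fin m → ℕ) (b : ℕ), (∀ i, w i < d) ∧
      ∑ i, g i * w i + d * b = ∑ i, g i * v i + d * a := by
  refine ⟨fun i => v i % d, a + ∑ i, g i * (v i / d), fun i => Nat.mod_lt _ hd, ?_⟩
  have hv : ∀ i, g i * v i = g i * (v i % d) + d * (g i * (v i / d)) := fun i => by
    conv_lhs => rw [← Nat.mod_add_div (v i) d]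
    ring
  simp only [hv, sum_add_distrib, ← mul_sum]
  ring

theorem mem_Isg_of_castSucc (m : ℕ) (k : Fin (m + 2) → ℕ) (u : Fin (m + 1) → ℕ) :
    ((∑ j, (u j : ℤ)), ∑ j, (k j.castSucc : ℤ) * u j) ∈ Isg m k :=
  ⟨Fin.snoc u 0, by simp [Fin.sum_univ_castSucc], by simp [Fin.sum_univ_castSucc]⟩

theorem mem_Isg_of_succ {m : ℕ} {k : Fin (m + 2) → ℕ} (h0 : k 0 = 0) {n : ℤ}
    (u : Fin (m + 1) → ℕ) (hu : ∑ j, (u j : ℤ) ≤ n) :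
    (n, ∑ j, (k j.succ : ℤ) * u j) ∈ Isg m k := by
  lift n - ∑ j, (u j : ℤ) to ℕ using sub_nonneg.mpr hu with c hc
  exact ⟨Fin.cons c u, by simp [Fin.sum_univ_succ, hc], by simp [Fin.sum_univ_succ, h0]⟩

theorem snd_nonneg_of_mem_F0 {m : ℕ} {k : Fin (m + 2) → ℕ} {α : ℤ × ℤ} (h : α ∈ F0 m k) :
    0 ≤ α.2 := by
  obtain ⟨u, r, -, h2⟩ := h
  rw [h2]
  positivity

theorem add_lt_mul_of_mem_Fd_diff_Isg {m : ℕ} {k : Fin (m + 2) → ℕ}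
    (hk : ∀ j : Fin (m + 1), k j.castSucc < k (Fin.last (m + 1))) {α : ℤ × ℤ}
    (h : α ∈ Fd m k \ Isg m k) :
    α.2 + α.1 < k (Fin.last (m + 1)) * α.1 := by
  obtain ⟨⟨u, r, h1, h2⟩, hI⟩ := h
  have hr : r ≠ 0 := by
    rintro rfl
    apply hI
    rw [show α = (_, _) from Prod.ext h1 h2]
    simpa using mem_Isg_of_castSucc m k u
  have hle : ∑ j, (k j.castSucc : ℤ) * u j + ∑ j, (u j : ℤ)
      ≤ k (Fin.last (m + 1)) * ∑ j, (u j : ℤ) := by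
    rw [← sum_add_distrib, mul_sum]
    gcongr with j
    have := hk j
    nlinarith [(u j).cast_nonneg (α := ℤ)]
  have hr_pos : (1 : ℤ) ≤ r := by exact_mod_cast Nat.one_le_iff_ne_zero.mpr hr
  rw [h1, h2]
  nlinarith

theorem mul_lt_of_mem_F0_diff_Isg {m : ℕ} {k : Fin (m + 2) → ℕ} (h0 : k 0 = 0)
    (hd : 0 < k (Fin.last (m + 1))) {α : ℤ × ℤ} (h : α ∈ F0 m k \ Isg m k) :
    k (Fin.last (m + 1)) * α.1 < α.2 + k (Fin.last (m + 1)) * (m * k (Fin.last (m + 1))) := by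
  set d := k (Fin.last (m + 1))
  obtain ⟨⟨v, r, -, h2⟩, hI⟩ := h
  obtain ⟨w, b, hw, hwb⟩ := exists_lt_sum_mul_add_mul_eq hd (fun i => k i.castSucc.succ)
    (fun i => v i.castSucc) (v (Fin.last m))
  have hs : α.2 = ∑ j, (k j.succ : ℤ) * Fin.snoc (α := fun _ => ℕ) w b j := by
    rw [h2]
    simp only [Fin.sum_univ_castSucc, Fin.snoc_castSucc, Fin.snoc_last, Fin.succ_last]
    exact_mod_cast hwb.symm
  have hdb : (d : ℤ) * b ≤ α.2 := by
    rw [hs]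
    simp only [Fin.sum_univ_castSucc, Fin.snoc_castSucc, Fin.snoc_last, Fin.succ_last]
    have : (0 : ℤ) ≤ ∑ i : Fin m, (k i.castSucc.succ : ℤ) * w i := by positivity
    linarith
  have hw_sum : ∑ i, (w i : ℤ) ≤ m * d := by
    exact_mod_cast (sum_le_card_nsmul _ _ d fun i _ => (hw i).le).trans_eq (by simp)
  by_contra! hle
  apply hI
  rw [← Prod.mk.eta (p := α), hs]
  refine mem_Isg_of_succ h0 _ ?_
  simp only [Fin.sum_univ_castSucc, Fin.snoc_castSucc, Fin.snoc_last]
  refine le_of_mul_le_mul_left ?_ (Int.natCast_pos.mpr hd)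
  nlinarith

theorem E_finite_general
    (m : ℕ) (k : Fin (m + 2) → ℕ)
    (hmono : StrictMono k) (h0 : k 0 = 0) :
    Set.Finite ((F0 m k \ Isg m k) ∩ (Fd m k \ Isg m k)) := by
  have hk : ∀ j : Fin (m + 1), k j.castSucc < k (Fin.last (m + 1)) :=
    fun j => hmono (Fin.castSucc_lt_last j)
  have hd : 0 < k (Fin.last (m + 1)) := h0 ▸ hk 0
  set d := k (Fin.last (m + 1))
  set N : ℤ := m * d * d
  refine (Set.finite_Icc ((0 : ℤ), (0 : ℤ)) (N, d * N)).subset ?_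
  rintro α ⟨hE0, hEd⟩
  have hs := snd_nonneg_of_mem_F0 hE0.1
  have hF0 := mul_lt_of_mem_F0_diff_Isg h0 hd hE0
  have hFd := add_lt_mul_of_mem_Fd_diff_Isg hk hEd
  have hn_le : α.1 ≤ N := by linarith
  have hn_nonneg : 0 ≤ α.1 := by nlinarith
  exact ⟨⟨hn_nonneg, hs⟩, hn_le,
    by nlinarith [mul_le_mul_of_nonneg_left hn_le (Int.natCast_nonneg d)]⟩

/-- with `E_0(A) = F_0(A)\I(A)`, `E_d(A) = F_d(A)\I(A)` and
`E(A) = E_0(A) ∩ E_d(A)`, the set `E(A) ⊂ ℤ²` is finite. -/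
theorem E_finite
    (m : ℕ) (k : Fin (m + 2) → ℕ)
    (hmono : StrictMono k) (h0 : k 0 = 0)
    (hgcd : Finset.univ.gcd k = 1) :
    Set.Finite ((F0 m k \ Isg m k) ∩ (Fd m k \ Isg m k)) :=
  E_finite_general m k hmono h0
end

section
/- Let 0 < k < d, u_k < 0 ≤ u_0, u_d integers, and set λ = (−1)^d d^d/(k^k (d−k)^{d−k}). The sequence c_j = (−1)^{jd}(−u_k + jd)!/((u_0 + j(d−k))!(u_d + jk)!) satisfies c_j ~ μ·λ^j·j^{−α_1 − 1/2} as j → ∞ for some constant μ ≠ 0 and α_1 = u_0 + u_k + u_d; in particular c_j/λ^j is not asymptotic to any polynomial in j when α_1 + 1/2 ∉ −ℕ, so Σ_j c_j z^j is not a rational function of z with denominator a power of (1 − λz). -/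
/-!
Stirling's formula gives `(n + A)! ~ √(2πn) (n/e)^n n^A`. Writing `d = a + k` and applying it to
the three factorials of `c_j`, whose arguments are `jd + A`, `ja + B`, `jk + C` with
`(A, B, C) = (-u_k, u_0, u_d)`, the powers of `e` cancel because `jd = ja + jk`, and what is left
is `μ λ^j j^(A - B - C - 1/2) = μ λ^j j^(-α₁ - 1/2)`. If `c_j = p(j) λ^j` eventually, then
`p(j) ~ μ j^(-α₁ - 1/2)`, while a polynomial is asymptotic to its leading term `c j^(deg p)`;
so the half-integer `-α₁ - 1/2` would equal `deg p`.
-/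

open Filter

noncomputable section

/-- `λ = (−1)^d d^d / (k^k (d−k)^{d−k})`. -/
def lamConst (k d : ℕ) : ℝ :=
  (-1) ^ d * (d : ℝ) ^ d / ((k : ℝ) ^ k * ((d : ℝ) - k) ^ (d - k))

/-- The coefficient sequence
`c_j = (−1)^{jd} (−u_k + jd)! / ((u_0 + j(d−k))! (u_d + jk)!)`. -/
def cseq (k d : ℕ) (u0 uk ud : ℤ) (j : ℕ) : ℝ :=
  (-1) ^ (j * d) * ((-uk + j * d).toNat.factorial : ℝ) /
    (((u0 + j * (d - k)).toNat.factorial : ℝ) *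
      ((ud + j * k).toNat.factorial : ℝ))

open Real Asymptotics Nat Topology

theorem factorial_add_isEquivalent (a : ℕ) :
    (fun n : ℕ => ((n + a)! : ℝ)) ~[atTop] fun n => (n ! : ℝ) * (n : ℝ) ^ a := by
  induction a with
  | zero => simpa using IsEquivalent.refl
  | succ a ih =>
    have hlin : (fun n : ℕ => (n : ℝ) + (a + 1)) ~[atTop] fun n => (n : ℝ) :=
      IsEquivalent.refl.add_const_of_norm_tendsto_atTop
        (tendsto_norm_atTop_atTop.comp tendsto_natCast_atTop_atTop)
    refine (ih.mul hlin).congr_left (.of_eq ?_) |>.congr_right (.of_eq ?_)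
    · ext n
      rw [Pi.mul_apply, ← Nat.add_assoc, factorial_succ]
      push_cast
      ring
    · ext n
      rw [Pi.mul_apply, pow_succ, mul_assoc]

def stirlingApprox (a n : ℕ) : ℝ := √(2 * n * π) * (n / exp 1) ^ n * (n : ℝ) ^ a

theorem factorial_add_isEquivalent_stirlingApprox (a : ℕ) :
    (fun n : ℕ => ((n + a)! : ℝ)) ~[atTop] stirlingApprox a :=
  (factorial_add_isEquivalent a).trans
    (Stirling.factorial_isEquivalent_stirling.mul IsEquivalent.refl)

theorem stirlingApprox_trinomial_ratio {a b j : ℕ} (ha : 0 < a) (hb : 0 < b) (hj : 0 < j)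
    (A B C : ℕ) :
    stirlingApprox A (j * (a + b)) / (stirlingApprox B (j * a) * stirlingApprox C (j * b)) =
      √((a + b) / (2 * π * a * b)) * (a + b) ^ A / (a ^ B * b ^ C) *
        ((a + b) ^ (a + b) / (a ^ a * b ^ b)) ^ j * (j : ℝ) ^ ((A : ℝ) - B - C - 1 / 2) := by
  have hj' : (0 : ℝ) < j := by exact_mod_cast hj
  have ha' : (0 : ℝ) < a := by exact_mod_cast ha
  have hb' : (0 : ℝ) < b := by exact_mod_cast hb
  have hrpow : (j : ℝ) ^ ((A : ℝ) - B - C - 1 / 2) = j ^ A / (j ^ B * j ^ C * √j) := by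
    rw [rpow_sub hj', rpow_sub hj', rpow_sub hj', rpow_natCast, rpow_natCast, rpow_natCast,
      ← sqrt_eq_rpow, div_div, div_div, mul_assoc]
  have hsqrt : √(2 * ↑(j * (a + b)) * π) / (√(2 * ↑(j * a) * π) * √(2 * ↑(j * b) * π)) =
      √((a + b) / (2 * π * a * b)) / √j := by
    rw [← sqrt_mul (by positivity), ← sqrt_div' _ (by positivity), ← sqrt_div' _ hj'.le]
    congr 1
    push_cast
    field_simp
  have hexp : ((↑(j * (a + b)) : ℝ) / exp 1) ^ (j * (a + b)) /
      ((↑(j * a) / exp 1) ^ (j * a) * (↑(j * b) / exp 1) ^ (j * b)) =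
      ((a + b) ^ (a + b) / (a ^ a * b ^ b)) ^ j := by
    push_cast
    simp only [div_pow, mul_pow, ← pow_mul]
    field_simp
    ring
  have hpow : ((↑(j * (a + b)) : ℝ)) ^ A / ((↑(j * a) : ℝ) ^ B * (↑(j * b) : ℝ) ^ C) =
      (a + b) ^ A / (a ^ B * b ^ C) * (j ^ A / (j ^ B * j ^ C)) := by
    push_cast
    simp only [mul_pow]
    field_simp
  calc _ = √(2 * ↑(j * (a + b)) * π) / (√(2 * ↑(j * a) * π) * √(2 * ↑(j * b) * π)) *
        (((↑(j * (a + b)) : ℝ) / exp 1) ^ (j * (a + b)) /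
          ((↑(j * a) / exp 1) ^ (j * a) * (↑(j * b) / exp 1) ^ (j * b))) *
        (((↑(j * (a + b)) : ℝ)) ^ A / ((↑(j * a) : ℝ) ^ B * (↑(j * b) : ℝ) ^ C)) := by
        simp only [stirlingApprox]
        field_simp
    _ = _ := by
        rw [hsqrt, hexp, hpow, hrpow]
        field_simp

theorem factorial_trinomial_isEquivalent {a b : ℕ} (ha : 0 < a) (hb : 0 < b) (A B C : ℕ) :
    (fun j : ℕ => ((j * (a + b) + A)! : ℝ) / ((j * a + B)! * (j * b + C)!)) ~[atTop]
      fun j => √((a + b) / (2 * π * a * b)) * (a + b) ^ A / (a ^ B * b ^ C) *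
        ((a + b) ^ (a + b) / (a ^ a * b ^ b)) ^ j * (j : ℝ) ^ ((A : ℝ) - B - C - 1 / 2) := by
  have hfac : ∀ {m : ℕ}, 0 < m → ∀ A : ℕ,
      (fun j : ℕ => ((j * m + A)! : ℝ)) ~[atTop] fun j => stirlingApprox A (j * m) :=
    fun hm A => (factorial_add_isEquivalent_stirlingApprox A).comp_tendsto
      (tendsto_id.atTop_mul_const' hm)
  refine ((hfac (by omega) A).div ((hfac ha B).mul (hfac hb C))).congr_right ?_
  filter_upwards [eventually_gt_atTop 0] with j hj
  exact stirlingApprox_trinomial_ratio ha hb hj A B C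

theorem cseq_eq_trinomial {k a : ℕ} {u0 uk ud : ℤ} (huk : uk ≤ 0) (hu0 : 0 ≤ u0) (hud : 0 ≤ ud)
    (j : ℕ) :
    cseq k (a + k) u0 uk ud j = ((-1) ^ (a + k)) ^ j *
      (((j * (a + k) + (-uk).toNat)! : ℝ) / ((j * a + u0.toNat)! * (j * k + ud.toNat)!)) := by
  have hA : (-uk + ↑j * ↑(a + k)).toNat = j * (a + k) + (-uk).toNat := by
    rw [← Nat.cast_mul]; omega
  have hB : (u0 + ↑j * (↑(a + k) - ↑k)).toNat = j * a + u0.toNat := by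
    rw [Nat.cast_add, add_sub_cancel_right, ← Nat.cast_mul]; omega
  have hC : (ud + ↑j * ↑k).toNat = j * k + ud.toNat := by omega
  rw [cseq, hA, hB, hC, ← pow_mul, mul_comm j, mul_div_assoc]

theorem lamConst_add (k a : ℕ) :
    lamConst k (a + k) = (-1) ^ (a + k) * ((a + k) ^ (a + k) / (a ^ a * k ^ k)) := by
  simp only [lamConst, Nat.add_sub_cancel]
  push_cast
  ring

theorem cseq_isEquivalent {k a : ℕ} (hk : 0 < k) (ha : 0 < a) {u0 uk ud : ℤ} (huk : uk ≤ 0)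
    (hu0 : 0 ≤ u0) (hud : 0 ≤ ud) :
    cseq k (a + k) u0 uk ud ~[atTop] fun j =>
      √((a + k) / (2 * π * a * k)) * (a + k) ^ (-uk).toNat / (a ^ u0.toNat * k ^ ud.toNat) *
        lamConst k (a + k) ^ j * (j : ℝ) ^ (-((u0 + uk + ud : ℤ) : ℝ) - 1 / 2) := by
  have hexp : ((-uk).toNat : ℝ) - u0.toNat - ud.toNat - 1 / 2 =
      -((u0 + uk + ud : ℤ) : ℝ) - 1 / 2 := by
    have hA : ((-uk).toNat : ℝ) = -uk := by exact_mod_cast Int.toNat_of_nonneg (by omega)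
    have hB : (u0.toNat : ℝ) = u0 := by exact_mod_cast Int.toNat_of_nonneg hu0
    have hC : (ud.toNat : ℝ) = ud := by exact_mod_cast Int.toNat_of_nonneg hud
    rw [hA, hB, hC]
    push_cast
    ring
  refine ((IsEquivalent.refl (u := fun j : ℕ => ((-1 : ℝ) ^ (a + k)) ^ j)).mul
    (factorial_trinomial_isEquivalent ha hk (-uk).toNat u0.toNat ud.toNat)).congr_left
    (.of_eq ?_) |>.congr_right (.of_eq ?_)
  · ext j
    exact (cseq_eq_trinomial huk hu0 hud j).symm
  · ext j
    rw [Pi.mul_apply, hexp, lamConst_add, mul_pow]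
    ring

theorem eq_zero_of_tendsto_const_mul_rpow {c t L : ℝ} (hL : L ≠ 0)
    (h : Tendsto (fun n : ℕ => c * (n : ℝ) ^ t) atTop (𝓝 L)) : t = 0 := by
  have hc : c ≠ 0 := by
    rintro rfl
    simp only [zero_mul] at h
    exact hL (tendsto_nhds_unique h tendsto_const_nhds)
  have hlim : Tendsto (fun n : ℕ => (n : ℝ) ^ t) atTop (𝓝 (c⁻¹ * L)) := by
    simpa [hc] using h.const_mul c⁻¹
  rcases lt_trichotomy t 0 with ht | ht | ht
  · have h0 := (tendsto_rpow_neg_atTop (neg_pos.2 ht)).comp tendsto_natCast_atTop_atTop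
    rw [Function.comp_def] at h0
    simp only [neg_neg] at h0
    exact absurd (tendsto_nhds_unique hlim h0) (mul_ne_zero (inv_ne_zero hc) hL)
  · exact ht
  · exact absurd hlim (not_tendsto_nhds_of_tendsto_atTop
      ((tendsto_rpow_atTop ht).comp tendsto_natCast_atTop_atTop) _)

theorem Polynomial.natDegree_eq_of_isEquivalent_rpow {p : Polynomial ℝ} {μ s : ℝ} (hμ : μ ≠ 0)
    (h : (fun n : ℕ => p.eval (n : ℝ)) ~[atTop] fun n => μ * (n : ℝ) ^ s) :
    s = p.natDegree := by
  have hlead := (p.isEquivalent_atTop_lead.comp_tendsto tendsto_natCast_atTop_atTop).symm.trans h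
  have hratio : Tendsto (fun n : ℕ => p.leadingCoeff / μ * (n : ℝ) ^ ((p.natDegree : ℝ) - s))
      atTop (𝓝 1) := by
    refine ((isEquivalent_iff_tendsto_one ?_).1 hlead).congr' ?_ <;>
      filter_upwards [eventually_gt_atTop 0] with n hn <;>
      have hn' : (0 : ℝ) < n := by exact_mod_cast hn
    · exact mul_ne_zero hμ (rpow_pos_of_pos hn' s).ne'
    · simp only [Function.comp_apply, Pi.div_apply]
      rw [rpow_sub hn', rpow_natCast]
      field_simp
  linarith [eq_zero_of_tendsto_const_mul_rpow one_ne_zero hratio]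

/-- Stirling estimate in the proof of Theorem 1.9: with
`α_1 = u_0 + u_k + u_d`, one has `c_j ~ μ λ^j j^{−α_1 − 1/2}` as `j → ∞`
for some nonzero constant `μ`; in particular `c_j/λ^j` is not eventually of
the form `p(j)` for a polynomial `p`, so `∑_j c_j z^j` is not a rational
function of `z` whose denominator is a power of `(1 − λz)`. -/
theorem stirling_asymptotics_not_rational
    (k d : ℕ) (hk : 0 < k) (hkd : k < d)
    (u0 uk ud : ℤ) (huk : uk < 0) (hu0 : 0 ≤ u0) (hud : 0 ≤ ud) :
    (∃ μ : ℝ, μ ≠ 0 ∧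
      Tendsto (fun j : ℕ =>
          cseq k d u0 uk ud j /
            (μ * lamConst k d ^ j *
              (j : ℝ) ^ (-((u0 + uk + ud : ℤ) : ℝ) - 1 / 2)))
        atTop (nhds 1)) ∧
    ¬∃ (p : Polynomial ℝ) (N : ℕ), ∀ j ≥ N,
        cseq k d u0 uk ud j = p.eval (j : ℝ) * lamConst k d ^ j := by
  obtain ⟨a, rfl⟩ : ∃ a, d = a + k := ⟨d - k, by omega⟩
  have ha : 0 < a := by omega
  have hequiv := cseq_isEquivalent hk ha huk.le hu0 hud
  set μ := √((a + k) / (2 * π * a * k)) * (a + k) ^ (-uk).toNat / (a ^ u0.toNat * k ^ ud.toNat)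
  have ha' : (0 : ℝ) < a := by exact_mod_cast ha
  have hk' : (0 : ℝ) < k := by exact_mod_cast hk
  have hμ : μ ≠ 0 := by positivity
  have hlam : lamConst k (a + k) ≠ 0 := by rw [lamConst_add]; positivity
  refine ⟨⟨μ, hμ, (isEquivalent_iff_tendsto_one ?_).1 hequiv⟩, ?_⟩
  · filter_upwards [eventually_gt_atTop 0] with j hj
    exact mul_ne_zero (by positivity) (rpow_pos_of_pos (by exact_mod_cast hj) _).ne'
  rintro ⟨p, N, hp⟩
  have hpoly : (fun j : ℕ => p.eval (j : ℝ)) ~[atTop]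
      fun j => μ * (j : ℝ) ^ (-((u0 + uk + ud : ℤ) : ℝ) - 1 / 2) := by
    refine ((hequiv.congr_left (eventually_atTop.2 ⟨N, hp⟩)).div
      (IsEquivalent.refl (u := fun j : ℕ => lamConst k (a + k) ^ j))).congr_left (.of_eq ?_)
      |>.congr_right (.of_eq ?_) <;>
    · ext j
      simp only [Pi.div_apply]
      field_simp
  have hdeg := Polynomial.natDegree_eq_of_isEquivalent_rpow hμ hpoly
  have hodd : (2 * (p.natDegree + (u0 + uk + ud)) + 1 : ℤ) = 0 := by
    exact_mod_cast (by linarith : (2 * (p.natDegree + ((u0 + uk + ud : ℤ) : ℝ)) + 1 : ℝ) = 0)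
  omega
end
end

section
/- (Girard's formula as a hypergeometric identity.) Let ρ_1(x),…,ρ_d(x) be the roots of the generic polynomial f(x;t) = x_0 + x_{k_1}t^{k_1} + ⋯ + x_{k_m}t^{k_m} + x_d t^d on a simply connected open set U ⊂ ℂ^{m+2} avoiding the discriminant locus and {x_0 x_d = 0}. Then for every integer s > 0, the power sum p_s(x) = ρ_1^s(x) + ⋯ + ρ_d^s(x) equals s·Σ_{r=1}^{s} (−1)^r (r−1)! Φ^B((r, rd − s); x')/x_d^r, where B is the 2×(m+1) matrix with columns (1,0),(1,k_1),…,(1,k_m), x' = (x_0,x_{k_1},…,x_{k_m}), and Φ^B is the associated hypergeometric polynomial. -/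
open Finset

noncomputable section

/-- The hypergeometric polynomial `Φ^B(β;x') = ∑_{u ∈ ℕ^{m+1}, B·u = β} x'^u/u!`
as a function of `x' = (x_0, x_{k_1}, …, x_{k_m})`, where `B` is the
`2×(m+1)` matrix with columns `(1,0),(1,k_1),…,(1,k_m)` (the first `m+1`
columns `(1, k_j)`, `j = 0,…,m`, of the monomial curve matrix).  Any `u` with
`B·u = β` has all entries at most `β_1`, so the sum below is complete. -/
def PhiB (m : ℕ) (k : Fin (m + 2) → ℕ) (β : ℤ × ℤ)
    (x : Fin (m + 1) → ℂ) : ℂ :=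
  if 0 ≤ β.1 then
    ∑ u : Fin (m + 1) → Fin (β.1.toNat + 1),
      if (∑ j, ((u j : ℕ) : ℤ)) = β.1 ∧
         (∑ j, (k j.castSucc : ℤ) * ((u j : ℕ) : ℤ)) = β.2 then
        (∏ j, x j ^ (u j : ℕ)) / (∏ j, ((u j : ℕ).factorial : ℂ))
      else 0
  else 0

/-!
Reversing the factorisation gives `∏ᵢ (1 - ρᵢ X) = 1 + h` with
`h = ∑_{j ≤ m} (x_{k_j} / x_d) X^{d - k_j}`. Comparing logarithmic derivatives,
`-∑ᵢ ρᵢ / (1 - ρᵢ X) = h' / (1 + h) = h' ∑_r (-h)^r`, and the coefficient of `X^{s-1}` gives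
Girard's formula `p_s = s ∑_{r=1}^{s} (-1)^r / r · [X^s] h^r`. The multinomial theorem then
evaluates `[X^s] h^r = r! Φ^B((r, rd - s); x') / x_d^r`.

Only congruences modulo `X^s` are needed, so everything stays polynomial: the geometric series
is truncated, and `1 + h` can be cancelled because `X` does not divide it.
-/

open Polynomial

theorem sum_range_eq_sum_Icc_one {M : Type*} [AddCommMonoid M] (f : ℕ → M) (n : ℕ) :
    ∑ r ∈ range n, f (r + 1) = ∑ r ∈ Icc 1 n, f r := by
  rw [range_eq_Ico, sum_Ico_add', zero_add, Ico_add_one_right_eq_Icc]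

namespace Polynomial

section CommSemiring

variable {R : Type*} [CommSemiring R]

theorem coeff_pow_mul_derivative (h : R[X]) (r m : ℕ) :
    (r + 1 : R) * (h ^ r * derivative h).coeff m = (m + 1) * (h ^ (r + 1)).coeff (m + 1) := by
  have := congrArg (coeff · m) (derivative_pow_succ h r)
  simp only [coeff_derivative, mul_assoc, coeff_C_mul] at this
  rw [← this, mul_comm]

theorem coeff_sum_C_mul_X_pow_pow {ι : Type*} [DecidableEq ι] (s : Finset ι) (c : ι → R)
    (e : ι → ℕ) (r n : ℕ) :
    ((∑ j ∈ s, C (c j) * X ^ e j) ^ r).coeff n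
      = ∑ v ∈ (piAntidiag s r).filter (fun v => ∑ j ∈ s, e j * v j = n),
          (Nat.multinomial s v : R) * ∏ j ∈ s, c j ^ v j := by
  rw [sum_pow_eq_sum_piAntidiag, finsetSum_coeff, sum_filter]
  refine sum_congr rfl fun v _ => ?_
  have hmonomial : ∏ j ∈ s, (C (c j) * X ^ e j) ^ v j
      = C (∏ j ∈ s, c j ^ v j) * X ^ (∑ j ∈ s, e j * v j) := by
    rw [map_prod, ← prod_pow_eq_pow_sum, ← prod_mul_distrib]
    exact prod_congr rfl fun j _ => by rw [mul_pow, ← C_pow, ← pow_mul]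
  rw [hmonomial, ← C_eq_natCast, ← mul_assoc, ← C_mul, coeff_C_mul_X_pow]
  exact if_congr eq_comm rfl rfl

end CommSemiring

section CommRing

variable {R : Type*} [CommRing R]

def truncLogDeriv (n : ℕ) (h : R[X]) : R[X] :=
  derivative h * ∑ r ∈ range n, (-h) ^ r

theorem X_pow_dvd_one_add_mul_truncLogDeriv_sub {h : R[X]} (hh : h.coeff 0 = 0) (n : ℕ) :
    X ^ n ∣ (1 + h) * truncLogDeriv n h - derivative h := by
  have hgeom : (1 + h) * ∑ r ∈ range n, (-h) ^ r = 1 - (-h) ^ n := by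
    rw [← mul_neg_geom_sum, sub_neg_eq_add]
  have hX : X ∣ -h := dvd_neg.mpr (X_dvd_iff.mpr hh)
  have hdiff : (1 + h) * truncLogDeriv n h - derivative h = -((-h) ^ n * derivative h) := by
    rw [truncLogDeriv, mul_left_comm, hgeom]
    ring
  rw [hdiff, dvd_neg]
  exact dvd_mul_of_dvd_left (pow_dvd_pow_of_dvd hX n) _

theorem X_pow_dvd_prod_one_sub_mul_sub_derivative {ι : Type*} (s : Finset ι) (ρ : ι → R)
    (n : ℕ) :
    X ^ n ∣ (∏ i ∈ s, (1 - C (ρ i) * X)) * -∑ i ∈ s, C (ρ i) * ∑ j ∈ range n, (C (ρ i) * X) ^ j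
      - derivative (∏ i ∈ s, (1 - C (ρ i) * X)) := by
  classical
  have hterm : ∀ i ∈ s,
      (∏ l ∈ s, (1 - C (ρ l) * X)) * (C (ρ i) * ∑ j ∈ range n, (C (ρ i) * X) ^ j)
        = (∏ l ∈ s.erase i, (1 - C (ρ l) * X)) * C (ρ i) * (1 - (C (ρ i) * X) ^ n) := by
    intro i hi
    rw [← mul_prod_erase s _ hi, ← mul_neg_geom_sum]
    ring
  rw [derivative_prod_finset, mul_neg, mul_sum, sum_congr rfl hterm, ← sum_neg_distrib,
    ← sum_sub_distrib]
  refine dvd_sum fun i _ => ?_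
  rw [derivative_sub, derivative_one, derivative_C_mul_X]
  exact Dvd.intro_left ((∏ l ∈ s.erase i, (1 - C (ρ l) * X)) * C (ρ i) * C (ρ i ^ n))
    (by rw [mul_pow, ← C_pow]; ring)

theorem coeff_sum_C_mul_geom_sum {ι : Type*} (s : Finset ι) (ρ : ι → R) {n m : ℕ} (hm : m < n) :
    (∑ i ∈ s, C (ρ i) * ∑ j ∈ range n, (C (ρ i) * X) ^ j).coeff m = ∑ i ∈ s, ρ i ^ (m + 1) := by
  simp only [finsetSum_coeff, coeff_C_mul, mul_pow, ← C_pow]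
  simp [hm, pow_succ']

theorem reflect_sum {ι : Type*} (s : Finset ι) (f : ι → R[X]) (N : ℕ) :
    reflect N (∑ i ∈ s, f i) = ∑ i ∈ s, reflect N (f i) :=
  map_sum (AddMonoidHom.mk' (reflect N) fun f g => reflect_add f g N) f s

theorem reflect_prod_X_sub_C {ι : Type*} (s : Finset ι) (ρ : ι → R) :
    reflect #s (∏ i ∈ s, (X - C (ρ i))) = ∏ i ∈ s, (1 - C (ρ i) * X) := by
  induction s using Finset.cons_induction with
  | empty => simp [reflect_one]
  | cons i s hi ih =>
    have hdeg : (∏ l ∈ s, (X - C (ρ l))).natDegree ≤ #s :=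
      (natDegree_prod_le s _).trans <|
        (sum_le_sum fun l _ => natDegree_X_sub_C_le (ρ l)).trans (by simp)
    rw [prod_cons, prod_cons, card_cons, add_comm, reflect_mul _ _ (natDegree_X_sub_C_le _) hdeg,
      ih, reflect_sub, reflect_C, reflect_one_X, pow_one]

end CommRing

section Field

variable {K : Type*} [Field K] [CharZero K]

theorem coeff_truncLogDeriv (n m : ℕ) (h : K[X]) :
    (truncLogDeriv n h).coeff m
      = -((m + 1) * ∑ r ∈ Icc 1 n, (-1) ^ r / r * (h ^ r).coeff (m + 1)) := by
  rw [truncLogDeriv, mul_sum, finsetSum_coeff, ← sum_range_eq_sum_Icc_one, mul_sum,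
    ← sum_neg_distrib]
  refine sum_congr rfl fun r _ => ?_
  have hr : (r + 1 : K) ≠ 0 := Nat.cast_add_one_ne_zero r
  have hcoeff := coeff_pow_mul_derivative h r m
  rw [neg_pow, ← C_1, ← C_neg, ← C_pow, mul_left_comm, coeff_C_mul, mul_comm (derivative h)]
  push_cast
  field_simp
  linear_combination (-1) ^ r * hcoeff

theorem sum_pow_eq_of_prod_one_sub_C_mul_X_eq_one_add {ι : Type*} {s : Finset ι} {ρ : ι → K}
    {h : K[X]} (hρ : ∏ i ∈ s, (1 - C (ρ i) * X) = 1 + h) {n : ℕ} (hn : 0 < n) :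
    ∑ i ∈ s, ρ i ^ n = n * ∑ r ∈ Icc 1 n, (-1) ^ r / r * (h ^ r).coeff n := by
  obtain ⟨n, rfl⟩ : ∃ m, n = m + 1 := ⟨n - 1, by omega⟩
  have hh : h.coeff 0 = 0 := by
    simpa [coeff_zero_eq_eval_zero, eval_prod] using congrArg (coeff · 0) hρ
  have hdvd : X ^ (n + 1) ∣ (1 + h) * (truncLogDeriv (n + 1) h
      + ∑ i ∈ s, C (ρ i) * ∑ j ∈ range (n + 1), (C (ρ i) * X) ^ j) := by
    have hroots := X_pow_dvd_prod_one_sub_mul_sub_derivative s ρ (n + 1)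
    rw [hρ, derivative_add, derivative_one, zero_add] at hroots
    convert dvd_sub (X_pow_dvd_one_add_mul_truncLogDeriv_sub hh (n + 1)) hroots using 1
    ring
  have hunit : ¬X ∣ 1 + h := by simp [X_dvd_iff, hh]
  have hcoeff := X_pow_dvd_iff.mp (prime_X.pow_dvd_of_dvd_mul_left _ hunit hdvd) n n.lt_succ_self
  rw [coeff_add, coeff_truncLogDeriv, coeff_sum_C_mul_geom_sum s ρ n.lt_succ_self] at hcoeff
  push_cast
  linear_combination hcoeff

end Field

end Polynomial

theorem PhiB_natCast (m : ℕ) (k : Fin (m + 2) → ℕ) (r : ℕ) (b : ℤ) (x : Fin (m + 1) → ℂ) :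
    PhiB m k (r, b) x
      = ∑ v ∈ (piAntidiag univ r).filter (fun v => ∑ j, (k j.castSucc : ℤ) * v j = b),
          (∏ j, x j ^ v j) / ∏ j, ((v j).factorial : ℂ) := by
  rw [PhiB, if_pos (Int.natCast_nonneg r), Int.toNat_natCast, ← sum_filter]
  dsimp only
  have hle : ∀ v ∈ piAntidiag (univ : Finset (Fin (m + 1))) r, ∀ j, v j ≤ r := fun v hv j =>
    (mem_piAntidiag.mp hv).1 ▸ single_le_sum (fun _ _ => Nat.zero_le _) (mem_univ j)
  refine sum_bij' (fun u _ j => u j)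
    (fun v hv j => ⟨v j, Nat.lt_succ_of_le (hle v (mem_filter.mp hv).1 j)⟩)
    ?_ ?_ (fun _ _ => rfl) (fun _ _ => rfl) fun _ _ => rfl
  · intro u hu
    obtain ⟨-, hsum, hb⟩ := mem_filter.mp hu
    exact mem_filter.mpr ⟨mem_piAntidiag.mpr ⟨by exact_mod_cast hsum, fun j _ => mem_univ j⟩, hb⟩
  · intro v hv
    obtain ⟨hv, hb⟩ := mem_filter.mp hv
    exact mem_filter.mpr ⟨mem_univ _, by exact_mod_cast (mem_piAntidiag.mp hv).1, hb⟩

theorem prod_one_sub_C_mul_X_eq_one_add {K : Type*} [Field K] [Infinite K] {m : ℕ}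
    {k : Fin (m + 2) → ℕ} (hk : ∀ j, k j ≤ k (Fin.last (m + 1))) {x : Fin (m + 2) → K}
    (hxd : x (Fin.last (m + 1)) ≠ 0) {ρ : Fin (k (Fin.last (m + 1))) → K}
    (hfac : ∀ t : K, ∑ j, x j * t ^ k j = x (Fin.last (m + 1)) * ∏ i, (t - ρ i)) :
    ∏ i, (1 - C (ρ i) * X) = 1 + ∑ j : Fin (m + 1),
      C (x j.castSucc / x (Fin.last (m + 1))) * X ^ (k (Fin.last (m + 1)) - k j.castSucc) := by
  have hpoly : ∑ j, C (x j) * X ^ k j = C (x (Fin.last (m + 1))) * ∏ i, (X - C (ρ i)) :=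
    funext fun t => by simpa [eval_finsetSum, eval_prod] using hfac t
  have hrev := congrArg (reflect (k (Fin.last (m + 1)))) hpoly
  have hprod := reflect_prod_X_sub_C (univ : Finset (Fin (k (Fin.last (m + 1))))) ρ
  rw [card_fin] at hprod
  rw [reflect_C_mul, hprod, reflect_sum, Fin.sum_univ_castSucc] at hrev
  simp only [reflect_C_mul_X_pow, revAt_le (hk _), Nat.sub_self, pow_zero, mul_one] at hrev
  apply mul_left_cancel₀ (C_ne_zero.mpr hxd)
  rw [← hrev, mul_add, mul_one, mul_sum, add_comm]
  congr 1
  refine sum_congr rfl fun j _ => ?_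
  rw [← mul_assoc, ← C_mul, mul_div_cancel₀ _ hxd]

open Nat in
theorem coeff_pow_eq_factorial_mul_PhiB {m : ℕ} {k : Fin (m + 2) → ℕ}
    (hk : ∀ j, k j ≤ k (Fin.last (m + 1))) {x : Fin (m + 2) → ℂ}
    (hxd : x (Fin.last (m + 1)) ≠ 0) (r s : ℕ) :
    ((∑ j : Fin (m + 1), C (x j.castSucc / x (Fin.last (m + 1)))
        * X ^ (k (Fin.last (m + 1)) - k j.castSucc)) ^ r).coeff s
      = r ! * PhiB m k (r, r * k (Fin.last (m + 1)) - s) (fun j => x j.castSucc)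
          / x (Fin.last (m + 1)) ^ r := by
  rw [coeff_sum_C_mul_X_pow_pow, PhiB_natCast, mul_sum, sum_div]
  refine sum_congr (filter_congr fun v hv => ?_) fun v hv => ?_
  · have hsum := (mem_piAntidiag.mp hv).1
    have hdeg : ((∑ j, (k (Fin.last (m + 1)) - k j.castSucc) * v j : ℕ) : ℤ)
        = r * k (Fin.last (m + 1)) - ∑ j, (k j.castSucc : ℤ) * v j := by
      push_cast [Nat.cast_sub (hk _), ← hsum, sub_mul, sum_sub_distrib, sum_mul]
      exact congrArg (· - _) (sum_congr rfl fun _ _ => mul_comm _ _)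
    omega
  · have hsum := (mem_piAntidiag.mp (mem_filter.mp hv).1).1
    have hmult : (∏ j, ((v j) ! : ℂ)) * Nat.multinomial univ v = r ! := by
      exact_mod_cast hsum ▸ Nat.multinomial_spec univ v
    have hfact : (∏ j, ((v j) ! : ℂ)) ≠ 0 :=
      prod_ne_zero_iff.mpr fun j _ => by exact_mod_cast (v j).factorial_ne_zero
    rw [prod_congr rfl fun j _ => div_pow _ _ _, prod_div_distrib, prod_pow_eq_pow_sum, hsum]
    field_simp
    linear_combination (∏ j, x j.castSucc ^ v j) * hmult

theorem power_sums_hypergeometric_general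
    (m : ℕ) (k : Fin (m + 2) → ℕ) (hmono : StrictMono k)
    (U : Set (Fin (m + 2) → ℂ))
    (ρ : Fin (k (Fin.last (m + 1))) → (Fin (m + 2) → ℂ) → ℂ)
    (hfac : ∀ x ∈ U, ∀ t : ℂ,
      (∑ j, x j * t ^ (k j)) = x (Fin.last (m + 1)) * ∏ i, (t - ρ i x))
    (hxd : ∀ x ∈ U, x (Fin.last (m + 1)) ≠ 0)
    (s : ℕ) (hs : 0 < s) :
    ∀ x ∈ U,
      (∑ i, ρ i x ^ s) =
        (s : ℂ) * ∑ r ∈ Finset.Icc 1 s,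
          (-1) ^ r * ((r - 1).factorial : ℂ) *
            PhiB m k ((r : ℤ), (r : ℤ) * (k (Fin.last (m + 1)) : ℤ) - s)
              (fun j => x j.castSucc) / x (Fin.last (m + 1)) ^ r := by
  intro x hx
  have hk : ∀ j, k j ≤ k (Fin.last (m + 1)) := fun j => hmono.monotone (Fin.le_last j)
  have hrev := prod_one_sub_C_mul_X_eq_one_add hk (hxd x hx) (ρ := fun i => ρ i x) (hfac x hx)
  rw [sum_pow_eq_of_prod_one_sub_C_mul_X_eq_one_add hrev hs]
  refine congrArg _ (sum_congr rfl fun r hr => ?_)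
  have hr : r ≠ 0 := Nat.one_le_iff_ne_zero.mp (mem_Icc.mp hr).1
  rw [coeff_pow_eq_factorial_mul_PhiB hk (hxd x hx), ← Nat.mul_factorial_pred hr]
  push_cast
  field_simp

/-- Girard's formula as a hypergeometric identity,
Corollary 1.12: if `ρ_1,…,ρ_d` are the (holomorphic) roots of the generic
polynomial `f(x;t) = x_0 + x_{k_1}t^{k_1} + ⋯ + x_d t^d` on an open set `U`
avoiding the discriminant locus and `{x_0 x_d = 0}`, then for every `s > 0`,
`p_s(x) = ∑_i ρ_i(x)^s = s ∑_{r=1}^s (−1)^r (r−1)! Φ^B((r, rd−s); x')/x_d^r`. -/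
theorem power_sums_hypergeometric
    (m : ℕ) (k : Fin (m + 2) → ℕ) (hmono : StrictMono k) (h0 : k 0 = 0)
    (U : Set (Fin (m + 2) → ℂ)) (hU : IsOpen U)
    (ρ : Fin (k (Fin.last (m + 1))) → (Fin (m + 2) → ℂ) → ℂ)
    (hρdiff : ∀ i, DifferentiableOn ℂ (ρ i) U)
    (hfac : ∀ x ∈ U, ∀ t : ℂ,
      (∑ j, x j * t ^ (k j)) = x (Fin.last (m + 1)) * ∏ i, (t - ρ i x))
    (hdisc : ∀ x ∈ U, Function.Injective fun i => ρ i x)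
    (hx0 : ∀ x ∈ U, x 0 ≠ 0)
    (hxd : ∀ x ∈ U, x (Fin.last (m + 1)) ≠ 0)
    (s : ℕ) (hs : 0 < s) :
    ∀ x ∈ U,
      (∑ i, ρ i x ^ s) =
        (s : ℂ) * ∑ r ∈ Finset.Icc 1 s,
          (-1) ^ r * ((r - 1).factorial : ℂ) *
            PhiB m k ((r : ℤ), (r : ℤ) * (k (Fin.last (m + 1)) : ℤ) - s)
              (fun j => x j.castSucc) / x (Fin.last (m + 1)) ^ r :=
  power_sums_hypergeometric_general m k hmono U ρ hfac hxd s hs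
end
end

section
/- Let ρ(x) be a holomorphic root of f(x;t) = x_0 + x_{k_1}t^{k_1} + ⋯ + x_d t^d on a simply connected open set avoiding the singular locus, and for α = (α_1,α_2) ∈ ℤ² with α_1 ≥ 0 and α ∉ A·ℕ^{m+2}, define ψ_ρ(α;x) = Σ_{i=0,…,dα_1, i≠α_2} Φ^A((α_1,i);x)·ρ(x)^{i−α_2}/(i − α_2). Then for each variable x_ℓ (ℓ ∈ {0,k_1,…,k_m,d}), ∂ψ_ρ(α;x)/∂x_ℓ = ψ_ρ(α − (1,ℓ); x), provided α_1 > 0. -/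
/-!
Expanding each `Φ^A((α_1,i);x)` into its monomials `x^u/u!` writes `ψ_ρ(α;x)` as
`∑_{|u| = α_1} x^u/u! · ρ^{n_u}/n_u` with `n_u = k·u − α_2`, which is nonzero because
`α ∉ A·ℕ^{m+2}`. Differentiating in `x_ℓ`, the terms in which `ρ` is differentiated add up to
`∂_ℓρ · ρ^{−α_2−1} · ∑_u x^u/u! ρ^{k·u} = ∂_ℓρ · ρ^{−α_2−1} · f(x;ρ)^{α_1}/α_1!` by the
multinomial theorem, hence vanish, so no formula for `∂_ℓρ` is needed. In the remaining terms
`∂_ℓ(x^u/u!) = x^{u−e_ℓ}/(u−e_ℓ)!`, and the substitution `v = u − e_ℓ` turns them into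
`ψ_ρ(α − (1,k_ℓ);x)`.
-/

open Finset

noncomputable section

/-- The hypergeometric polynomial `Φ^A(β;x) = ∑_{u ∈ ℕ^{m+2}, A·u = β} x^u/u!`
as a function of `x = (x_0, x_{k_1}, …, x_{k_m}, x_d)`, for the monomial
curve matrix `A` with columns `(1, k_j)`.  Any `u` with `A·u = β` has all
entries at most `β_1`, so the sum below is complete. -/
def PhiA (m : ℕ) (k : Fin (m + 2) → ℕ) (β : ℤ × ℤ)
    (x : Fin (m + 2) → ℂ) : ℂ :=
  if 0 ≤ β.1 then
    ∑ u : Fin (m + 2) → Fin (β.1.toNat + 1),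
      if (∑ j, ((u j : ℕ) : ℤ)) = β.1 ∧
         (∑ j, (k j : ℤ) * ((u j : ℕ) : ℤ)) = β.2 then
        (∏ j, x j ^ (u j : ℕ)) / (∏ j, ((u j : ℕ).factorial : ℂ))
      else 0
  else 0

/-- The algebraic function
`ψ_ρ(α;x) = ∑_{0 ≤ i ≤ dα_1, i ≠ α_2} Φ^A((α_1,i);x) ρ(x)^{i−α_2}/(i−α_2)`
built from a root `ρ(x)` of the generic polynomial `f(x;t)`. -/
def psiRho (m : ℕ) (k : Fin (m + 2) → ℕ)
    (ρ : (Fin (m + 2) → ℂ) → ℂ) (α : ℤ × ℤ)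
    (x : Fin (m + 2) → ℂ) : ℂ :=
  ∑ i ∈ Finset.range (((k (Fin.last (m + 1)) : ℤ) * α.1).toNat + 1),
    if (i : ℤ) ≠ α.2 then
      PhiA m k (α.1, (i : ℤ)) x * ρ x ^ ((i : ℤ) - α.2) / (((i : ℤ) - α.2 : ℤ) : ℂ)
    else 0

open scoped Nat

section Algebra

variable {ι 𝕜 : Type*} [Fintype ι] [Field 𝕜]

def dividedMonomial (u : ι → ℕ) (x : ι → 𝕜) : 𝕜 := ∏ j, x j ^ u j / (u j)!

theorem sum_piAntidiag_dividedMonomial_mul_pow [DecidableEq ι] [CharZero 𝕜]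
    (k : ι → ℕ) (a : ℕ) (x : ι → 𝕜) (t : 𝕜) :
    ∑ u ∈ piAntidiag univ a, dividedMonomial u x * t ^ (k ⬝ᵥ u) =
      (∑ j, x j * t ^ k j) ^ a / a ! := by
  rw [sum_pow_eq_sum_piAntidiag, sum_div]
  refine sum_congr rfl fun u hu => ?_
  have hfact : (a ! : 𝕜) = (∏ j, ((u j)! : 𝕜)) * Nat.multinomial univ u := by
    rw [← (mem_piAntidiag.mp hu).1]
    exact_mod_cast (Nat.multinomial_spec univ u).symm
  have hmult : (Nat.multinomial univ u : 𝕜) ≠ 0 := by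
    exact_mod_cast (Nat.multinomial_pos univ u).ne'
  simp only [dividedMonomial, dotProduct, mul_pow, prod_mul_distrib, ← pow_mul,
    prod_pow_eq_pow_sum, prod_div_distrib]
  rw [hfact]
  field_simp

theorem dividedMonomial_update [DecidableEq ι] (u : ι → ℕ) (x : ι → 𝕜) (ℓ : ι) (t : 𝕜) :
    dividedMonomial u (Function.update x ℓ t) =
      t ^ u ℓ / (u ℓ)! * ∏ j ∈ univ.erase ℓ, x j ^ u j / (u j)! := by
  rw [dividedMonomial, ← mul_prod_erase _ _ (mem_univ ℓ), Function.update_self]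
  congr 1
  exact prod_congr rfl fun j hj => by rw [Function.update_of_ne (ne_of_mem_erase hj)]

end Algebra

section Calculus

variable {ι 𝕜 : Type*} [Fintype ι] [NontriviallyNormedField 𝕜]

theorem fderiv_apply_single_of_hasDerivAt_update [DecidableEq ι] {E : Type*}
    [NormedAddCommGroup E] [NormedSpace 𝕜 E] {f : (ι → 𝕜) → E} {x : ι → 𝕜} {ℓ : ι} {f' : E}
    (hf : DifferentiableAt 𝕜 f x) (h : HasDerivAt (fun t => f (Function.update x ℓ t)) f' (x ℓ)) :
    fderiv 𝕜 f x (Pi.single ℓ 1) = f' :=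
  (hf.hasFDerivAt.comp_hasDerivAt_of_eq (x ℓ) (hasDerivAt_update x ℓ (x ℓ))
    (Function.update_eq_self ℓ x).symm).unique h

theorem hasDerivAt_pow_succ_div_factorial [CharZero 𝕜] (n : ℕ) (t : 𝕜) :
    HasDerivAt (fun t : 𝕜 => t ^ (n + 1) / ((n + 1)! : 𝕜)) (t ^ n / n !) t := by
  refine ((hasDerivAt_pow (n + 1) t).div_const _).congr_deriv ?_
  rw [Nat.factorial_succ]
  push_cast
  field_simp

theorem hasDerivAt_zpow_div [CharZero 𝕜] {n : ℤ} (hn : n ≠ 0) {t : 𝕜} (ht : t ≠ 0) :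
    HasDerivAt (fun t : 𝕜 => t ^ n / (n : 𝕜)) (t ^ (n - 1)) t := by
  have : (n : 𝕜) ≠ 0 := Int.cast_ne_zero.mpr hn
  refine ((hasDerivAt_zpow n t (Or.inl ht)).div_const _).congr_deriv ?_
  field_simp

theorem differentiable_dividedMonomial (u : ι → ℕ) :
    Differentiable 𝕜 (dividedMonomial u : (ι → 𝕜) → 𝕜) := by
  unfold dividedMonomial
  fun_prop

theorem fderiv_dividedMonomial_add_single [DecidableEq ι] [CharZero 𝕜] (v : ι → ℕ) (x : ι → 𝕜)
    (ℓ : ι) :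
    fderiv 𝕜 (dividedMonomial (v + Pi.single ℓ 1)) x (Pi.single ℓ 1) = dividedMonomial v x := by
  refine fderiv_apply_single_of_hasDerivAt_update (differentiable_dividedMonomial _ x) ?_
  simp only [dividedMonomial_update, Pi.add_apply, Pi.single_eq_same]
  refine ((hasDerivAt_pow_succ_div_factorial (v ℓ) (x ℓ)).mul_const _).congr_deriv ?_
  rw [dividedMonomial, ← mul_prod_erase _ _ (mem_univ ℓ)]
  congr 1
  refine prod_congr rfl fun j hj => ?_
  simp [Pi.single_eq_of_ne (ne_of_mem_erase hj)]

theorem fderiv_dividedMonomial_single_of_eq_zero [DecidableEq ι] {u : ι → ℕ} {ℓ : ι}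
    (hu : u ℓ = 0) (x : ι → 𝕜) : fderiv 𝕜 (dividedMonomial u) x (Pi.single ℓ 1) = 0 := by
  refine fderiv_apply_single_of_hasDerivAt_update (differentiable_dividedMonomial _ x) ?_
  simp only [dividedMonomial_update, hu, pow_zero, Nat.factorial_zero, Nat.cast_one, div_one,
    one_mul]
  exact hasDerivAt_const _ _

end Calculus

section Psi

variable {ι 𝕜 : Type*} [Fintype ι] [DecidableEq ι] [NontriviallyNormedField 𝕜] [CharZero 𝕜]

theorem sum_piAntidiag_succ_fderiv_dividedMonomial_mul (ℓ : ι) (a : ℕ) (x : ι → 𝕜)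
    (G : (ι → ℕ) → 𝕜) :
    ∑ u ∈ piAntidiag univ (a + 1), G u * fderiv 𝕜 (dividedMonomial u) x (Pi.single ℓ 1) =
      ∑ v ∈ piAntidiag univ a, G (v + Pi.single ℓ 1) * dividedMonomial v x := by
  have hinj :
      Set.InjOn (· + Pi.single ℓ 1) ((piAntidiag univ a : Finset (ι → ℕ)) : Set (ι → ℕ)) :=
    fun v _ w _ h => add_right_cancel h
  have hsub : (piAntidiag univ a).image (· + Pi.single ℓ 1) ⊆ piAntidiag univ (a + 1) := by
    intro u hu
    obtain ⟨v, hv, rfl⟩ := mem_image.mp hu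
    simp_all [sum_add_distrib]
  have hzero : ∀ u ∈ piAntidiag univ (a + 1),
      u ∉ (piAntidiag univ a).image (· + Pi.single ℓ 1) →
        G u * fderiv 𝕜 (dividedMonomial u) x (Pi.single ℓ 1) = 0 := by
    intro u hu hnot
    suffices hℓ : u ℓ = 0 by rw [fderiv_dividedMonomial_single_of_eq_zero hℓ, mul_zero]
    by_contra hℓ
    have hcancel : u - Pi.single ℓ 1 + Pi.single ℓ 1 = u := by
      ext j
      rcases eq_or_ne j ℓ with rfl | hj
      · simp only [Pi.add_apply, Pi.sub_apply, Pi.single_eq_same]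
        omega
      · simp [Pi.single_eq_of_ne hj]
    refine hnot (mem_image.mpr ⟨u - Pi.single ℓ 1, ?_, hcancel⟩)
    have hsum := congrArg (∑ j, · j) hcancel
    simp only [Pi.add_apply, sum_add_distrib] at hsum
    simp_all
  calc ∑ u ∈ piAntidiag univ (a + 1), G u * fderiv 𝕜 (dividedMonomial u) x (Pi.single ℓ 1)
      = ∑ u ∈ (piAntidiag univ a).image (· + Pi.single ℓ 1),
          G u * fderiv 𝕜 (dividedMonomial u) x (Pi.single ℓ 1) := (sum_subset hsub hzero).symm
    _ = ∑ v ∈ piAntidiag univ a, G (v + Pi.single ℓ 1) * dividedMonomial v x := by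
      rw [sum_image hinj]
      simp only [fderiv_dividedMonomial_add_single]

/-- `ψ_ρ((a,c);x)` expanded into monomials. A term with `k·u = c` is `0` because `(0 : 𝕜)⁻¹ = 0`,
just as the paper omits `i = α_2`. -/
def psiMonomialSum (k : ι → ℕ) (ρ : (ι → 𝕜) → 𝕜) (a : ℕ) (c : ℤ) (x : ι → 𝕜) : 𝕜 :=
  ∑ u ∈ piAntidiag univ a,
    dividedMonomial u x * (ρ x ^ ((k ⬝ᵥ u : ℕ) - c) / (((k ⬝ᵥ u : ℕ) - c : ℤ) : 𝕜))

theorem fderiv_psiMonomialSum_apply_single {k : ι → ℕ} {ρ : (ι → 𝕜) → 𝕜} {x : ι → 𝕜}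
    (hρ : DifferentiableAt 𝕜 ρ x) (hρ0 : ρ x ≠ 0) (hroot : ∑ j, x j * ρ x ^ k j = 0)
    {a : ℕ} {c : ℤ} (hc : ∀ u ∈ piAntidiag univ (a + 1), ((k ⬝ᵥ u : ℕ) : ℤ) ≠ c) (ℓ : ι) :
    fderiv 𝕜 (psiMonomialSum k ρ (a + 1) c) x (Pi.single ℓ 1) =
      psiMonomialSum k ρ a (c - k ℓ) x := by
  set n : (ι → ℕ) → ℤ := fun u => (k ⬝ᵥ u : ℕ) - c
  have hterm : ∀ u ∈ piAntidiag univ (a + 1),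
      HasFDerivAt (fun y => dividedMonomial u y * (ρ y ^ n u / (n u : 𝕜)))
        (dividedMonomial u x • (ρ x ^ (n u - 1) • fderiv 𝕜 ρ x) +
          (ρ x ^ n u / (n u : 𝕜)) • fderiv 𝕜 (dividedMonomial u) x) x := fun u hu =>
    (differentiable_dividedMonomial u x).hasFDerivAt.mul
      ((hasDerivAt_zpow_div (sub_ne_zero.mpr (hc u hu)) hρ0).comp_hasFDerivAt x hρ.hasFDerivAt)
  have hvanish : ∑ u ∈ piAntidiag univ (a + 1),
      dividedMonomial u x * (ρ x ^ (n u - 1) * fderiv 𝕜 ρ x (Pi.single ℓ 1)) = 0 := by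
    calc _ = fderiv 𝕜 ρ x (Pi.single ℓ 1) * ρ x ^ (-c - 1) *
          ∑ u ∈ piAntidiag univ (a + 1), dividedMonomial u x * ρ x ^ (k ⬝ᵥ u) := by
          rw [mul_sum]
          refine sum_congr rfl fun u _ => ?_
          rw [show n u - 1 = (k ⬝ᵥ u : ℕ) + (-c - 1) by ring, zpow_add₀ hρ0, zpow_natCast]
          ring
      _ = 0 := by rw [sum_piAntidiag_dividedMonomial_mul_pow, hroot]; simp
  have hψ : HasFDerivAt (psiMonomialSum k ρ (a + 1) c) _ x := HasFDerivAt.fun_sum hterm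
  rw [hψ.fderiv]
  simp only [_root_.sum_apply, add_apply, smul_apply, smul_eq_mul, sum_add_distrib, hvanish,
    zero_add]
  rw [sum_piAntidiag_succ_fderiv_dividedMonomial_mul, psiMonomialSum]
  refine sum_congr rfl fun v _ => ?_
  simp only [n, dotProduct_add, dotProduct_single, mul_one]
  push_cast
  ring_nf

end Psi

theorem dotProduct_le_of_mem_piAntidiag {ι : Type*} [Fintype ι] [DecidableEq ι] {k : ι → ℕ}
    {d : ℕ} (hk : ∀ j, k j ≤ d) {a : ℕ} {u : ι → ℕ} (hu : u ∈ piAntidiag univ a) :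
    k ⬝ᵥ u ≤ d * a := by
  rw [← (mem_piAntidiag.mp hu).1, mul_sum]
  exact sum_le_sum fun j _ => Nat.mul_le_mul_right _ (hk j)

theorem PhiA_natCast (m : ℕ) (k : Fin (m + 2) → ℕ) (a : ℕ) (b : ℤ) (x : Fin (m + 2) → ℂ) :
    PhiA m k (a, b) x =
      ∑ u ∈ piAntidiag univ a with ((k ⬝ᵥ u : ℕ) : ℤ) = b, dividedMonomial u x := by
  rw [PhiA, if_pos (Int.natCast_nonneg a), Int.toNat_natCast, ← sum_filter]
  have hle : ∀ v ∈ piAntidiag univ a, ∀ j : Fin (m + 2), v j < a + 1 := fun v hv j =>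
    Nat.lt_succ_of_le ((mem_piAntidiag.mp hv).1 ▸ single_le_sum (by simp) (mem_univ j))
  refine sum_bij' (fun u _ j => (u j : ℕ)) (fun v hv j => ⟨v j, hle v (mem_filter.mp hv).1 j⟩)
    ?_ ?_ (fun _ _ => rfl) (fun _ _ => rfl) ?_
  · intro u hu
    obtain ⟨-, hsum, hdot⟩ := mem_filter.mp hu
    dsimp only at hsum hdot
    rw [mem_filter, mem_piAntidiag]
    refine ⟨⟨by exact_mod_cast hsum, by simp⟩, ?_⟩
    simpa [dotProduct] using hdot
  · intro v hv
    obtain ⟨hsum, hdot⟩ := mem_filter.mp hv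
    rw [mem_filter]
    dsimp only
    refine ⟨mem_univ _, by exact_mod_cast (mem_piAntidiag.mp hsum).1, ?_⟩
    simpa [dotProduct] using hdot
  · intro u _
    simp [dividedMonomial, prod_div_distrib]

theorem psiRho_natCast_eq (m : ℕ) (k : Fin (m + 2) → ℕ) (hk : ∀ j, k j ≤ k (Fin.last (m + 1)))
    (ρ : (Fin (m + 2) → ℂ) → ℂ) (a : ℕ) (c : ℤ) :
    psiRho m k ρ (a, c) = psiMonomialSum k ρ a c := by
  funext x
  set G : ℤ → ℂ := fun i => ρ x ^ (i - c) / ((i - c : ℤ) : ℂ)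
  have hterm : ∀ i : ℕ, (if (i : ℤ) ≠ c then
      PhiA m k (a, i) x * ρ x ^ ((i : ℤ) - c) / (((i : ℤ) - c : ℤ) : ℂ) else 0) =
        PhiA m k (a, i) x * G i := by
    intro i
    split_ifs with h
    · exact mul_div_assoc _ _ _
    · simp [G, not_not.mp h]
  have hmaps : ∀ u ∈ piAntidiag univ a, k ⬝ᵥ u ∈ range (k (Fin.last (m + 1)) * a + 1) :=
    fun u hu => mem_range_succ_iff.mpr (dotProduct_le_of_mem_piAntidiag hk hu)
  rw [psiRho, psiMonomialSum, ← Nat.cast_mul, Int.toNat_natCast,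
    sum_congr rfl fun i _ => hterm i]
  simp only [PhiA_natCast, sum_mul]
  rw [← sum_fiberwise_of_maps_to hmaps]
  refine sum_congr rfl fun i _ => ?_
  simp only [Nat.cast_inj]
  exact sum_congr rfl fun u hu => by rw [(mem_filter.mp hu).2]

theorem psiRho_derivative_general
    (m : ℕ) (k : Fin (m + 2) → ℕ) (hmono : StrictMono k)
    (U : Set (Fin (m + 2) → ℂ)) (hU : IsOpen U)
    (ρ : (Fin (m + 2) → ℂ) → ℂ)
    (hρdiff : DifferentiableOn ℂ ρ U)
    (hroot : ∀ x ∈ U, (∑ j, x j * ρ x ^ (k j)) = 0)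
    (hρ0 : ∀ x ∈ U, ρ x ≠ 0)
    (α : ℤ × ℤ) (hα1 : 0 < α.1)
    (hα : ¬∃ u : Fin (m + 2) → ℕ,
      (∑ j, (u j : ℤ)) = α.1 ∧ (∑ j, (k j : ℤ) * u j) = α.2) :
    ∀ x ∈ U, ∀ j : Fin (m + 2),
      fderiv ℂ (psiRho m k ρ α) x (Pi.single j 1) =
        psiRho m k ρ (α.1 - 1, α.2 - (k j : ℤ)) x := by
  intro x hx ℓ
  obtain ⟨α1, c⟩ := α
  obtain ⟨a, rfl⟩ : ∃ a : ℕ, α1 = ((a + 1 : ℕ) : ℤ) := ⟨(α1 - 1).toNat, by dsimp only at hα1; omega⟩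
  have hk : ∀ j, k j ≤ k (Fin.last (m + 1)) := fun j => hmono.monotone (Fin.le_last j)
  have hc : ∀ u ∈ piAntidiag univ (a + 1), ((k ⬝ᵥ u : ℕ) : ℤ) ≠ c := fun u hu hku =>
    hα ⟨u, by dsimp only; exact_mod_cast (mem_piAntidiag.mp hu).1,
      by simpa [dotProduct] using hku⟩
  dsimp only
  rw [psiRho_natCast_eq m k hk, show ((a + 1 : ℕ) : ℤ) - 1 = a by push_cast; ring,
    psiRho_natCast_eq m k hk]
  exact fderiv_psiMonomialSum_apply_single (hρdiff.differentiableAt (hU.mem_nhds hx))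
    (hρ0 x hx) (hroot x hx) hc ℓ

/-- equation (2.3): let `ρ(x)` be a holomorphic root of
`f(x;t) = x_0 + x_{k_1}t^{k_1} + ⋯ + x_d t^d` on an open set `U` avoiding the
singular locus (so `x_0 ≠ 0`, `x_d ≠ 0`, `ρ(x) ≠ 0` and `f'(x;ρ(x)) ≠ 0`
on `U`), and let `α = (α_1,α_2) ∈ ℤ²` with `α_1 > 0` and `α ∉ A·ℕ^{m+2}`.
Then for each variable `x_ℓ`, `ℓ ∈ {0, k_1, …, k_m, d}`,
`∂ψ_ρ(α;x)/∂x_ℓ = ψ_ρ(α − (1,ℓ); x)` on `U`. -/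
theorem psiRho_derivative
    (m : ℕ) (k : Fin (m + 2) → ℕ) (hmono : StrictMono k) (h0 : k 0 = 0)
    (U : Set (Fin (m + 2) → ℂ)) (hU : IsOpen U)
    (ρ : (Fin (m + 2) → ℂ) → ℂ)
    (hρdiff : DifferentiableOn ℂ ρ U)
    (hroot : ∀ x ∈ U, (∑ j, x j * ρ x ^ (k j)) = 0)
    (hx0 : ∀ x ∈ U, x 0 ≠ 0)
    (hxd : ∀ x ∈ U, x (Fin.last (m + 1)) ≠ 0)
    (hρ0 : ∀ x ∈ U, ρ x ≠ 0)
    (hsimple : ∀ x ∈ U, (∑ j, (k j : ℂ) * x j * ρ x ^ (k j - 1)) ≠ 0)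
    (α : ℤ × ℤ) (hα1 : 0 < α.1)
    (hα : ¬∃ u : Fin (m + 2) → ℕ,
      (∑ j, (u j : ℤ)) = α.1 ∧ (∑ j, (k j : ℤ) * u j) = α.2) :
    ∀ x ∈ U, ∀ j : Fin (m + 2),
      fderiv ℂ (psiRho m k ρ α) x (Pi.single j 1) =
        psiRho m k ρ (α.1 - 1, α.2 - (k j : ℤ)) x :=
  psiRho_derivative_general m k hmono U hU ρ hρdiff hroot hρ0 α hα1 hα
end
end
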